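/- arXiv:2006.07158 — 3 statements merged into one kernel-verified Lean document; each statement's English description precedes it below -/
import Mathlib

section
/- (Equivalence of flows.) Let b satisfy hypothesis (H^b_0). For any T > 0 there exists a constant C = C(T,κ₁,d) ≥ 1 such that for every ε ∈ (0,1], all s,t ≥ 0 with |t−s| ≤ T and all x,y ∈ ℝ^d: C^{-1}·(|θ^{(ε)}_{t,s}(x)−y| + |t−s|) ≤ |θ^{(1)}_{t,s}(x)−y| + |t−s| ≤ C·(|θ^{(ε)}_{t,s}(x)−y| + |t−s|), and moreover C^{-1}·(|x−θ^{(ε)}_{s,t}(y)| + |t−s|) ≤ |θ^{(ε)}_{t,s}(x)−y| + |t−s| ≤ C·(|x−θ^{(ε)}_{s,t}(y)| + |t−s|). -/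
noncomputable section

open MeasureTheory Matrix Set

/-- The state space `ℝ^d`. -/
abbrev Vec (d : ℕ) := EuclideanSpace ℝ (Fin d)

/-- Hypothesis (H^b_β): `b` is measurable, bounded at the origin uniformly in time
and Hölder/Lipschitz in space uniformly in time. -/
def HolderDrift (d : ℕ) (b : ℝ → Vec d → Vec d) (κ₁ β : ℝ) : Prop :=
  Measurable (Function.uncurry b) ∧
  (∀ t : ℝ, 0 ≤ t → ‖b t 0‖ ≤ κ₁) ∧
  (∀ t : ℝ, 0 ≤ t → ∀ x y : Vec d, ‖b t x - b t y‖ ≤ κ₁ * max (‖x - y‖ ^ β) ‖x - y‖)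

/-- A smooth nonnegative mollifier supported in the closed unit ball with total mass one. -/
structure IsMollifier (d : ℕ) (ρ : Vec d → ℝ) : Prop where
  smooth : ContDiff ℝ (⊤ : ℕ∞) ρ
  nonneg : ∀ x, 0 ≤ ρ x
  support_subset : Function.support ρ ⊆ Metric.closedBall 0 1
  integral_eq_one : ∫ x, ρ x = 1

/-- The spatially mollified drift `b_ε(t,x) = ∫ b(t,y) ρ_ε(x-y) dy`. -/
def mollifiedDrift (d : ℕ) (ρ : Vec d → ℝ) (ε : ℝ) (b : ℝ → Vec d → Vec d)
    (t : ℝ) (x : Vec d) : Vec d :=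
  ∫ y : Vec d, (ε ^ (-(d : ℝ)) * ρ (ε⁻¹ • (x - y))) • b t y

/-- `θ` is the flow of the (time-dependent) vector field `f`:
`θ t s x = x + ∫_s^t f(r, θ r s x) dr` for all nonnegative times. -/
def IsFlow (d : ℕ) (f : ℝ → Vec d → Vec d) (θ : ℝ → ℝ → Vec d → Vec d) : Prop :=
  ∀ s t : ℝ, 0 ≤ s → 0 ≤ t → ∀ x : Vec d,
    θ t s x = x + ∫ r in s..t, f r (θ r s x)

/-- The Gaussian kernel `g_λ(t,x) = t^{-d/2} exp(-λ |x|²/t)`. -/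
def gaussk (d : ℕ) (l t : ℝ) (x : Vec d) : ℝ :=
  t ^ (-(d : ℝ) / 2) * Real.exp (-l * ‖x‖ ^ 2 / t)

/-- A drift which is measurable, bounded at the origin uniformly in time, and Lipschitz in
space with constant `κ` uniformly in time. -/
def LipschitzDrift (d : ℕ) (b : ℝ → Vec d → Vec d) (κ : ℝ) : Prop :=
  Measurable (Function.uncurry b) ∧
  (∃ M : ℝ, ∀ t : ℝ, 0 ≤ t → ‖b t 0‖ ≤ M) ∧
  (∀ t : ℝ, 0 ≤ t → ∀ x y : Vec d, ‖b t x - b t y‖ ≤ κ * ‖x - y‖)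

/-! ### Auxiliary lemmas -/

section Aux

open Module Function

/-- Integral form of Grönwall's inequality (forward). -/
lemma my_gronwall {A K σ τ : ℝ} (hστ : σ ≤ τ) (hA : 0 ≤ A) (hK : 0 ≤ K)
    {h : ℝ → ℝ} (hc : ContinuousOn h (Icc σ τ))
    (hineq : ∀ u ∈ Icc σ τ, h u ≤ A + K * ∫ r in σ..u, h r) :
    ∀ u ∈ Icc σ τ, h u ≤ A * Real.exp (K * (τ - σ)) := by
  set p : ℝ → ℝ := fun u => max σ (min u τ) with hp
  have hpmem : ∀ u, p u ∈ Icc σ τ := fun u =>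
    ⟨le_max_left _ _, max_le hστ (min_le_right _ _)⟩
  have hpid : ∀ u ∈ Icc σ τ, p u = u := by
    intro u hu
    simp [hp, min_eq_left hu.2, max_eq_right hu.1]
  set g : ℝ → ℝ := fun u => h (p u) with hg
  have hgc : Continuous g := by
    apply hc.comp_continuous
    · exact continuous_const.max (continuous_id.min continuous_const)
    · exact hpmem
  have hgeq : ∀ u ∈ Icc σ τ, g u = h u := fun u hu => by rw [hg]; simp [hpid u hu]
  set ψ : ℝ → ℝ := fun u => ∫ r in σ..u, g r with hψ
  have hψeq : ∀ u ∈ Icc σ τ, ψ u = ∫ r in σ..u, h r := by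
    intro u hu
    apply intervalIntegral.integral_congr
    intro r hr
    apply hgeq
    rcases hr with ⟨h1, h2⟩
    constructor
    · exact le_trans (le_min (le_refl σ) hu.1) h1
    · exact le_trans h2 (max_le hστ hu.2)
  have hψd : ∀ u : ℝ, HasDerivAt ψ (g u) u := by
    intro u
    exact intervalIntegral.integral_hasDerivAt_right (hgc.intervalIntegrable _ _)
      (hgc.stronglyMeasurable.stronglyMeasurableAtFilter) hgc.continuousAt
  set χ : ℝ → ℝ := fun u => (A + K * ψ u) * Real.exp (-K * (u - σ)) with hχ
  have hχd : ∀ u : ℝ, HasDerivAt χ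
      (K * g u * Real.exp (-K * (u - σ)) + (A + K * ψ u) * (Real.exp (-K * (u - σ)) * -K)) u := by
    intro u
    have h1 : HasDerivAt (fun u => A + K * ψ u) (K * g u) u :=
      ((hψd u).const_mul K).const_add A
    have h2 : HasDerivAt (fun u => Real.exp (-K * (u - σ))) (Real.exp (-K * (u - σ)) * -K) u := by
      have : HasDerivAt (fun u : ℝ => -K * (u - σ)) (-K) u := by
        simpa using (((hasDerivAt_id u).sub_const σ).const_mul (-K))
      simpa using this.exp
    exact h1.mul h2
  have hanti : AntitoneOn χ (Icc σ τ) := by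
    apply antitoneOn_of_deriv_nonpos (convex_Icc σ τ)
    · exact fun u _ => ((hχd u).continuousAt).continuousWithinAt
    · exact fun u _ => ((hχd u).differentiableAt).differentiableWithinAt
    · intro u hu
      rw [interior_Icc] at hu
      rw [(hχd u).deriv]
      have hu' : u ∈ Icc σ τ := Ioo_subset_Icc_self hu
      have hb : g u ≤ A + K * ψ u := by
        rw [hgeq u hu', hψeq u hu']; exact hineq u hu'
      have hepos : (0:ℝ) < Real.exp (-K * (u - σ)) := Real.exp_pos _
      nlinarith [mul_le_mul_of_nonneg_left hb hK, hepos.le]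
  intro u hu
  have hχσ : χ σ = A := by simp [hχ, hψ]
  have hle : χ u ≤ A := by
    rw [← hχσ]; exact hanti (left_mem_Icc.mpr hστ) hu hu.1
  have hexp : A + K * ψ u ≤ A * Real.exp (K * (u - σ)) := by
    have key : Real.exp (-K * (u - σ)) * Real.exp (K * (u - σ)) = 1 := by
      rw [← Real.exp_add]; simp
    calc A + K * ψ u = ((A + K * ψ u) * Real.exp (-K * (u - σ))) * Real.exp (K * (u - σ)) := by
          rw [mul_assoc, key, mul_one]
      _ ≤ A * Real.exp (K * (u - σ)) :=
          mul_le_mul_of_nonneg_right hle (Real.exp_pos _).le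
  calc h u ≤ A + K * ∫ r in σ..u, h r := hineq u hu
    _ = A + K * ψ u := by rw [hψeq u hu]
    _ ≤ A * Real.exp (K * (u - σ)) := hexp
    _ ≤ A * Real.exp (K * (τ - σ)) := by
        apply mul_le_mul_of_nonneg_left _ hA
        exact Real.exp_le_exp.mpr (by nlinarith [hu.2])

/-- Integral form of Grönwall's inequality (backward). -/
lemma my_gronwall_backward {A K σ τ : ℝ} (hστ : σ ≤ τ) (hA : 0 ≤ A) (hK : 0 ≤ K)
    {h : ℝ → ℝ} (hc : ContinuousOn h (Icc σ τ))
    (hineq : ∀ u ∈ Icc σ τ, h u ≤ A + K * ∫ r in u..τ, h r) :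
    ∀ u ∈ Icc σ τ, h u ≤ A * Real.exp (K * (τ - σ)) := by
  have hmap : ∀ v ∈ Icc σ τ, σ + τ - v ∈ Icc σ τ := by
    intro v hv; constructor <;> [linarith [hv.2]; linarith [hv.1]]
  have hmain := my_gronwall hστ hA hK (h := fun v => h (σ + τ - v))
    (hc.comp (by fun_prop) (fun v hv => hmap v hv))
    (by
      intro v hv
      have h1 : (∫ r in σ..v, h (σ + τ - r)) = ∫ r in (σ + τ - v)..τ, h r := by
        rw [intervalIntegral.integral_comp_sub_left h (σ + τ)]
        norm_num
      rw [h1]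
      exact hineq _ (hmap v hv))
  intro u hu
  have := hmain (σ + τ - u) (hmap u hu)
  simpa using this

/-- Comparison of two integral curves of nearby vector fields. -/
lemma my_comp (d : ℕ) {σ τ L L' : ℝ} (hστ : σ ≤ τ) (hL : 0 ≤ L) (hL' : 0 ≤ L')
    {ga gc : ℝ → Vec d} (hga : IntervalIntegrable ga volume σ τ)
    (hgc : IntervalIntegrable gc volume σ τ)
    {a c : ℝ → Vec d} (ha : ∀ u ∈ Icc σ τ, a u = a σ + ∫ r in σ..u, ga r)
    (hc : ∀ u ∈ Icc σ τ, c u = c σ + ∫ r in σ..u, gc r)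
    (hcross : ∀ r ∈ Icc σ τ, ‖ga r - gc r‖ ≤ L' + L * ‖a r - c r‖) :
    ‖a τ - c τ‖ ≤ (‖a σ - c σ‖ + L' * (τ - σ)) * Real.exp (L * (τ - σ)) ∧
    ‖a σ - c σ‖ ≤ (‖a τ - c τ‖ + L' * (τ - σ)) * Real.exp (L * (τ - σ)) := by
  set g : ℝ → Vec d := fun r => ga r - gc r with hgdef
  have hg : IntervalIntegrable g volume σ τ := hga.sub hgc
  have hsub : ∀ u ∈ Icc σ τ, ∀ v ∈ Icc σ τ, ∀ (f : ℝ → Vec d),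
      IntervalIntegrable f volume σ τ → IntervalIntegrable f volume u v := by
    intro u hu v hv f hf
    apply hf.mono_set
    rw [uIcc_of_le hστ]
    exact uIcc_subset_Icc hu hv
  -- key identity
  have hkey : ∀ u ∈ Icc σ τ, a u - c u = (a σ - c σ) + ∫ r in σ..u, g r := by
    intro u hu
    rw [ha u hu, hc u hu, intervalIntegral.integral_sub
      (hsub σ (left_mem_Icc.mpr hστ) u hu ga hga) (hsub σ (left_mem_Icc.mpr hστ) u hu gc hgc)]
    abel
  -- continuity of δ
  have hprim : ContinuousOn (fun u => ∫ r in σ..u, g r) (Icc σ τ) := by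
    have := intervalIntegral.continuousOn_primitive_interval (f := g) (a := σ) (b := τ)
      (μ := volume) (by
        rw [uIcc_of_le hστ, integrableOn_Icc_iff_integrableOn_Ioc]
        exact (intervalIntegrable_iff_integrableOn_Ioc_of_le hστ).mp hg)
    rwa [uIcc_of_le hστ] at this
  have hδc : ContinuousOn (fun u => ‖a u - c u‖) (Icc σ τ) := by
    apply ContinuousOn.congr (((continuousOn_const (c := a σ - c σ)).add hprim).norm)
    intro u hu
    simp only
    rw [hkey u hu]; rfl
  have hδnn : (0:ℝ) ≤ ‖a σ - c σ‖ := norm_nonneg _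
  have hτσ : (0:ℝ) ≤ τ - σ := by linarith
  -- pointwise integral bound, both directions
  have hbound : ∀ u ∈ Icc σ τ, ∀ v ∈ Icc σ τ, u ≤ v →
      (∫ r in u..v, ‖g r‖) ≤ L' * (v - u) + L * ∫ r in u..v, ‖a r - c r‖ := by
    intro u hu v hv huv
    have h1 : (∫ r in u..v, ‖g r‖) ≤ ∫ r in u..v, (L' + L * ‖a r - c r‖) := by
      apply intervalIntegral.integral_mono_on huv ((hsub u hu v hv g hg).norm)
      · apply ContinuousOn.intervalIntegrable
        apply (continuousOn_const.add (continuousOn_const.mul (hδc.mono _)))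
        rw [uIcc_of_le huv]
        exact Icc_subset_Icc hu.1 hv.2
      · intro r hr
        exact hcross r ⟨le_trans hu.1 hr.1, le_trans hr.2 hv.2⟩
    have hint2 : IntervalIntegrable (fun r => L * ‖a r - c r‖) volume u v := by
      apply ContinuousOn.intervalIntegrable
      apply continuousOn_const.mul (hδc.mono _)
      rw [uIcc_of_le huv]
      exact Icc_subset_Icc hu.1 hv.2
    have h2 : (∫ r in u..v, (L' + L * ‖a r - c r‖)) =
        L' * (v - u) + L * ∫ r in u..v, ‖a r - c r‖ := by
      rw [intervalIntegral.integral_add (intervalIntegrable_const) hint2,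
        intervalIntegral.integral_const, intervalIntegral.integral_const_mul]
      simp [smul_eq_mul, mul_comm]
    calc (∫ r in u..v, ‖g r‖) ≤ _ := h1
      _ = _ := h2
  constructor
  · -- forward
    have hgr := my_gronwall (A := ‖a σ - c σ‖ + L' * (τ - σ)) (K := L) hστ
      (by positivity) hL hδc (by
        intro u hu
        have := hkey u hu
        have h3 : ‖a u - c u‖ ≤ ‖a σ - c σ‖ + ∫ r in σ..u, ‖g r‖ := by
          rw [this]
          exact le_trans (norm_add_le _ _) (by
            gcongr
            exact intervalIntegral.norm_integral_le_integral_norm hu.1)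
        have h4 := hbound σ (left_mem_Icc.mpr hστ) u hu hu.1
        have h5 : L' * (u - σ) ≤ L' * (τ - σ) := by nlinarith [hu.2]
        linarith)
    exact hgr τ (right_mem_Icc.mpr hστ)
  · -- backward
    have hgr := my_gronwall_backward (A := ‖a τ - c τ‖ + L' * (τ - σ)) (K := L) hστ
      (by positivity) hL hδc (by
        intro u hu
        have hadd : (∫ r in σ..u, g r) + ∫ r in u..τ, g r = ∫ r in σ..τ, g r :=
          intervalIntegral.integral_add_adjacent_intervals
            (hsub σ (left_mem_Icc.mpr hστ) u hu g hg)
            (hsub u hu τ (right_mem_Icc.mpr hστ) g hg)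
        have hkeyu := hkey u hu
        have hkeyτ := hkey τ (right_mem_Icc.mpr hστ)
        have h3 : a u - c u = (a τ - c τ) - ∫ r in u..τ, g r := by
          rw [hkeyu, hkeyτ, ← hadd]; abel
        have h4 : ‖a u - c u‖ ≤ ‖a τ - c τ‖ + ∫ r in u..τ, ‖g r‖ := by
          rw [h3]
          exact le_trans (norm_sub_le _ _) (by
            gcongr
            exact intervalIntegral.norm_integral_le_integral_norm hu.2)
        have h5 := hbound u hu τ (right_mem_Icc.mpr hστ) hu.2
        have h6 : L' * (τ - u) ≤ L' * (τ - σ) := by nlinarith [hu.1]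
        linarith)
    exact hgr σ (left_mem_Icc.mpr hστ)
lemma my_apriori (d : ℕ) {σ τ A₀ K : ℝ} (hστ : σ ≤ τ) (hA₀ : 0 ≤ A₀) (hK : 0 ≤ K)
    {f : ℝ → Vec d → Vec d} (hfm : StronglyMeasurable (Function.uncurry f))
    (hgrow : ∀ r ∈ Icc σ τ, ∀ z : Vec d, ‖f r z‖ ≤ A₀ + K * ‖z‖)
    {x : Vec d} {a : ℝ → Vec d}
    (heq : ∀ u ∈ Icc σ τ, a u = x + ∫ r in σ..u, f r (a r)) :
    IntervalIntegrable (fun r => f r (a r)) volume σ τ := by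
  set g : ℝ → Vec d := fun r => f r (a r) with hgdef
  have hτσ : (0:ℝ) ≤ τ - σ := by linarith
  set S : Set ℝ := {u : ℝ | u ∈ Icc σ τ ∧ IntervalIntegrable g volume σ u} with hSdef
  have hσS : σ ∈ S := by
    refine ⟨left_mem_Icc.mpr hστ, ?_⟩
    rw [intervalIntegrable_iff_integrableOn_Ioc_of_le le_rfl, Ioc_self]
    exact integrableOn_empty
  have hbdd : BddAbove S := ⟨τ, fun u hu => hu.1.2⟩
  have hne : S.Nonempty := ⟨σ, hσS⟩
  set e := sSup S with hedef
  have hσe : σ ≤ e := le_csSup hbdd hσS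
  have heτ : e ≤ τ := csSup_le hne (fun u hu => hu.1.2)
  have hlt : ∀ u, σ ≤ u → u < e → IntervalIntegrable g volume σ u := by
    intro u h1 h2
    obtain ⟨v, hvS, huv⟩ := exists_lt_of_lt_csSup hne h2
    apply hvS.2.mono_set
    rw [uIcc_of_le h1, uIcc_of_le (le_trans h1 huv.le)]
    exact Icc_subset_Icc le_rfl huv.le
  -- values beyond e
  have hxval : ∀ u ∈ Icc σ τ, e < u → a u = x := by
    intro u hu hue
    have hnot : ¬ IntervalIntegrable g volume σ u := fun hint =>
      absurd (le_csSup hbdd ⟨hu, hint⟩) (not_le.mpr hue)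
    have h0 : (∫ r in σ..u, g r) = 0 := by
      rw [intervalIntegral.integral_of_le hu.1, MeasureTheory.integral_undef]
      intro hint
      exact hnot ((intervalIntegrable_iff_integrableOn_Ioc_of_le hu.1).mpr hint)
    rw [heq u hu, h0, add_zero]
  -- uniform bound on S
  set B₀ : ℝ := (‖x‖ + A₀ * (τ - σ)) * Real.exp (K * (τ - σ)) with hB₀def
  have hB₀nn : 0 ≤ B₀ := by positivity
  set B : ℝ := (A₀ + K * B₀) * (τ - σ) with hBdef
  have hSbound : ∀ u, u ∈ Icc σ τ → IntervalIntegrable g volume σ u →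
      (∫ r in σ..u, ‖g r‖) ≤ B := by
    intro u hu hint
    have hsubint : ∀ w ∈ Icc σ u, IntervalIntegrable g volume σ w := by
      intro w hw
      apply hint.mono_set
      rw [uIcc_of_le hu.1, uIcc_of_le hw.1]
      exact Icc_subset_Icc le_rfl hw.2
    have hprim : ContinuousOn (fun w => ∫ r in σ..w, g r) (Icc σ u) := by
      have := intervalIntegral.continuousOn_primitive_interval (f := g) (a := σ) (b := u)
        (μ := volume) (by
          rw [uIcc_of_le hu.1, integrableOn_Icc_iff_integrableOn_Ioc]
          exact (intervalIntegrable_iff_integrableOn_Ioc_of_le hu.1).mp hint)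
      rwa [uIcc_of_le hu.1] at this
    have hacont : ContinuousOn a (Icc σ u) := by
      apply ContinuousOn.congr ((continuousOn_const (c := x)).add hprim)
      intro w hw
      exact heq w ⟨hw.1, le_trans hw.2 hu.2⟩
    -- Gronwall for ‖a‖
    have hnorm : ∀ w ∈ Icc σ u, ‖a w‖ ≤ (‖x‖ + A₀ * (τ - σ)) + K * ∫ r in σ..w, ‖a r‖ := by
      intro w hw
      have hwτ : w ∈ Icc σ τ := ⟨hw.1, le_trans hw.2 hu.2⟩
      have h1 : ‖a w‖ ≤ ‖x‖ + ∫ r in σ..w, ‖g r‖ := by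
        rw [heq w hwτ]
        exact le_trans (norm_add_le _ _) (by
          gcongr
          exact intervalIntegral.norm_integral_le_integral_norm hw.1)
      have hintan : IntervalIntegrable (fun r => A₀ + K * ‖a r‖) volume σ w := by
        apply ContinuousOn.intervalIntegrable
        apply continuousOn_const.add (continuousOn_const.mul ((hacont.norm).mono _))
        rw [uIcc_of_le hw.1]
        exact Icc_subset_Icc le_rfl hw.2
      have h2 : (∫ r in σ..w, ‖g r‖) ≤ ∫ r in σ..w, (A₀ + K * ‖a r‖) := by
        apply intervalIntegral.integral_mono_on hw.1 (hsubint w hw).norm hintan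
        intro r hr
        exact hgrow r ⟨hr.1, le_trans hr.2 (le_trans hw.2 hu.2)⟩ (a r)
      have hintan2 : IntervalIntegrable (fun r => K * ‖a r‖) volume σ w := by
        apply ContinuousOn.intervalIntegrable
        apply continuousOn_const.mul ((hacont.norm).mono _)
        rw [uIcc_of_le hw.1]
        exact Icc_subset_Icc le_rfl hw.2
      have h3 : (∫ r in σ..w, (A₀ + K * ‖a r‖)) = A₀ * (w - σ) + K * ∫ r in σ..w, ‖a r‖ := by
        rw [intervalIntegral.integral_add intervalIntegrable_const hintan2,
          intervalIntegral.integral_const, intervalIntegral.integral_const_mul]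
        simp [smul_eq_mul, mul_comm]
      have h4 : A₀ * (w - σ) ≤ A₀ * (τ - σ) := by nlinarith [hw.2, hu.2]
      linarith
    have hAnn : 0 ≤ ‖x‖ + A₀ * (τ - σ) := add_nonneg (norm_nonneg x) (mul_nonneg hA₀ hτσ)
    have hgron := my_gronwall (σ := σ) (τ := u) hu.1 hAnn hK (hacont.norm) hnorm
    have hB : ∀ w ∈ Icc σ u, ‖a w‖ ≤ B₀ := by
      intro w hw
      refine le_trans (hgron w hw) ?_
      rw [hB₀def]
      exact mul_le_mul_of_nonneg_left
        (Real.exp_le_exp.mpr (by nlinarith [hu.2])) hAnn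
    have h5 : (∫ r in σ..u, ‖g r‖) ≤ ∫ r in σ..u, (A₀ + K * B₀) := by
      apply intervalIntegral.integral_mono_on hu.1 hint.norm intervalIntegrable_const
      intro r hr
      have := hgrow r ⟨hr.1, le_trans hr.2 hu.2⟩ (a r)
      nlinarith [hB r hr]
    rw [intervalIntegral.integral_const, smul_eq_mul] at h5
    have hcoef : 0 ≤ A₀ + K * B₀ := add_nonneg hA₀ (mul_nonneg hK hB₀nn)
    calc (∫ r in σ..u, ‖g r‖) ≤ (u - σ) * (A₀ + K * B₀) := h5
      _ ≤ (τ - σ) * (A₀ + K * B₀) :=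
          mul_le_mul_of_nonneg_right (by linarith [hu.2]) hcoef
      _ = B := by rw [hBdef]; ring
  -- integrability on Ico σ e
  have hIco : IntegrableOn g (Ico σ e) volume := by
    rcases eq_or_lt_of_le hσe with heq' | hlt'
    · rw [← heq', Ico_self]; exact integrableOn_empty
    · -- continuity of a on Ico σ e
      have hacont : ContinuousOn a (Ico σ e) := by
        intro u hu
        obtain ⟨v, hvS, huv⟩ := exists_lt_of_lt_csSup hne hu.2
        have hvint : IntervalIntegrable g volume σ v := hvS.2
        have hprim : ContinuousOn (fun w => ∫ r in σ..w, g r) (Icc σ v) := by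
          have := intervalIntegral.continuousOn_primitive_interval (f := g) (a := σ) (b := v)
            (μ := volume) (by
              rw [uIcc_of_le hvS.1.1, integrableOn_Icc_iff_integrableOn_Ioc]
              exact (intervalIntegrable_iff_integrableOn_Ioc_of_le hvS.1.1).mp hvint)
          rwa [uIcc_of_le hvS.1.1] at this
        have hcv : ContinuousOn a (Icc σ v) := by
          apply ContinuousOn.congr ((continuousOn_const (c := x)).add hprim)
          intro w hw
          exact heq w ⟨hw.1, le_trans hw.2 hvS.1.2⟩
        have h1 : ContinuousWithinAt a (Icc σ v) u := hcv u ⟨hu.1, huv.le⟩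
        apply h1.mono_of_mem_nhdsWithin
        apply mem_nhdsWithin.mpr
        refine ⟨Iio v, isOpen_Iio, huv, ?_⟩
        intro w hw
        exact ⟨hw.2.1, hw.1.le⟩
      have haesm : AEStronglyMeasurable g (volume.restrict (Ico σ e)) := by
        have ham : AEMeasurable (fun r => (r, a r)) (volume.restrict (Ico σ e)) :=
          (measurable_id.aemeasurable).prodMk (hacont.aemeasurable measurableSet_Ico)
        have := (hfm.aestronglyMeasurable).comp_aemeasurable ham
        simpa [Function.comp_def, Function.uncurry] using this
      refine ⟨haesm, ?_⟩
      -- finite lintegral via monotone union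
      set un : ℕ → ℝ := fun n => e - (e - σ) / (n + 1) with hundef
      have hun1 : ∀ n : ℕ, σ ≤ un n := by
        intro n
        have h1 : (e - σ) / (n + 1) ≤ e - σ := by
          apply div_le_self (by linarith)
          push_cast; linarith [Nat.cast_nonneg (α := ℝ) n]
        simp only [hundef]; linarith
      have hun2 : ∀ n : ℕ, un n < e := by
        intro n
        have h1 : (0:ℝ) < (e - σ) / (n + 1) := by
          apply div_pos (by linarith)
          positivity
        simp only [hundef]; linarith
      have hmono : Monotone un := by
        intro n m hnm
        simp only [hundef]
        have hc : (0:ℝ) < (n:ℝ) + 1 := by positivity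
        have hd : (0:ℝ) < (m:ℝ) + 1 := by positivity
        have he' : (n:ℝ) ≤ (m:ℝ) := Nat.cast_le.mpr hnm
        have heσ : (0:ℝ) ≤ e - σ := by linarith
        have : (e - σ) / (m + 1) ≤ (e - σ) / (n + 1) := by
          rw [div_le_div_iff₀ hd hc]
          nlinarith
        linarith
      have hunion : Ico σ e = ⋃ n, Icc σ (un n) := by
        ext w
        simp only [mem_Ico, mem_iUnion, mem_Icc]
        constructor
        · rintro ⟨hw1, hw2⟩
          obtain ⟨n, hn⟩ := exists_nat_ge ((e - σ) / (e - w))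
          refine ⟨n, hw1, ?_⟩
          have hew : (0:ℝ) < e - w := by linarith
          have h1 : (e - σ) ≤ (e - w) * (n + 1) := by
            rw [div_le_iff₀ hew] at hn
            nlinarith
          have h2 : (e - σ) / (n + 1) ≤ e - w := by
            rw [div_le_iff₀ (by positivity)]
            linarith
          simp only [hundef]; linarith
        · rintro ⟨n, hw1, hw2⟩
          exact ⟨hw1, lt_of_le_of_lt hw2 (hun2 n)⟩
      have hdir : Directed (· ⊆ ·) (fun n => Icc σ (un n)) := by
        apply Monotone.directed_le
        intro n m hnm
        exact Icc_subset_Icc le_rfl (hmono hnm)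
      rw [HasFiniteIntegral, ← withDensity_apply _ measurableSet_Ico, hunion,
        Directed.measure_iUnion hdir]
      apply lt_of_le_of_lt (b := ENNReal.ofReal B)
      · apply iSup_le
        intro n
        rw [withDensity_apply _ measurableSet_Icc]
        have hin : IntervalIntegrable g volume σ (un n) := hlt (un n) (hun1 n) (hun2 n)
        have hIccint : IntegrableOn g (Icc σ (un n)) volume := by
          rw [integrableOn_Icc_iff_integrableOn_Ioc]
          exact (intervalIntegrable_iff_integrableOn_Ioc_of_le (hun1 n)).mp hin
        rw [← ofReal_integral_norm_eq_lintegral_enorm hIccint]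
        apply ENNReal.ofReal_le_ofReal
        have : (∫ r in Icc σ (un n), ‖g r‖) = ∫ r in σ..(un n), ‖g r‖ := by
          rw [intervalIntegral.integral_of_le (hun1 n), integral_Icc_eq_integral_Ioc]
        rw [this]
        exact hSbound (un n) ⟨hun1 n, le_trans (hun2 n).le heτ⟩ hin
      · exact ENNReal.ofReal_lt_top
  -- integrability on Icc e τ
  have hIcc : IntegrableOn g (Icc e τ) volume := by
    rw [integrableOn_Icc_iff_integrableOn_Ioc]
    have hfx : IntegrableOn (fun u => f u x) (Ioc e τ) volume := by
      apply Measure.integrableOn_of_bounded (M := A₀ + K * ‖x‖) measure_Ioc_lt_top.ne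
      · have h1 : StronglyMeasurable ((Function.uncurry f) ∘ (fun u : ℝ => (u, x))) :=
          hfm.comp_measurable (measurable_id.prodMk measurable_const)
        exact (h1.aestronglyMeasurable :
          AEStronglyMeasurable (fun u : ℝ => f u x) volume)
      · apply (ae_restrict_iff' measurableSet_Ioc).mpr
        apply Filter.Eventually.of_forall
        intro u hu
        exact hgrow u ⟨le_trans hσe hu.1.le, hu.2⟩ x
    apply hfx.congr_fun _ measurableSet_Ioc
    intro u hu
    simp only [hgdef]
    rw [hxval u ⟨le_trans hσe hu.1.le, hu.2⟩ hu.1]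
  -- combine
  rw [intervalIntegrable_iff_integrableOn_Ioc_of_le hστ]
  apply (hIco.union hIcc).mono_set
  intro w hw
  rcases lt_or_ge w e with h | h
  · exact Or.inl ⟨hw.1.le, h⟩
  · exact Or.inr ⟨h, hw.2⟩

lemma my_apriori_backward (d : ℕ) {σ τ A₀ K : ℝ} (hστ : σ ≤ τ) (hA₀ : 0 ≤ A₀) (hK : 0 ≤ K)
    {f : ℝ → Vec d → Vec d} (hfm : StronglyMeasurable (Function.uncurry f))
    (hgrow : ∀ r ∈ Icc σ τ, ∀ z : Vec d, ‖f r z‖ ≤ A₀ + K * ‖z‖)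
    {x : Vec d} {a : ℝ → Vec d}
    (heq : ∀ u ∈ Icc σ τ, a u = x + ∫ r in τ..u, f r (a r)) :
    IntervalIntegrable (fun r => f r (a r)) volume σ τ := by
  set fb : ℝ → Vec d → Vec d := fun r z => -f (σ + τ - r) z with hfbdef
  set ab : ℝ → Vec d := fun v => a (σ + τ - v) with habdef
  have hmap : ∀ v ∈ Icc σ τ, σ + τ - v ∈ Icc σ τ := by
    intro v hv; constructor
    · linarith [hv.2]
    · linarith [hv.1]
  have hfbm : StronglyMeasurable (Function.uncurry fb) := by
    have h1 : StronglyMeasurable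
        ((Function.uncurry f) ∘ (fun p : ℝ × Vec d => (σ + τ - p.1, p.2))) :=
      hfm.comp_measurable ((measurable_const.sub measurable_fst).prodMk measurable_snd)
    exact (h1.neg : StronglyMeasurable fun p : ℝ × Vec d => -f (σ + τ - p.1) p.2)
  have hfbgrow : ∀ r ∈ Icc σ τ, ∀ z : Vec d, ‖fb r z‖ ≤ A₀ + K * ‖z‖ := by
    intro r hr z
    simp only [hfbdef, norm_neg]
    exact hgrow _ (hmap r hr) z
  have heqb : ∀ v ∈ Icc σ τ, ab v = x + ∫ r in σ..v, fb r (ab r) := by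
    intro v hv
    have h1 : (∫ r in σ..v, fb r (ab r)) =
        ∫ r in σ..v, (fun w => -f w (a w)) (σ + τ - r) := by
      apply intervalIntegral.integral_congr
      intro r _
      simp [hfbdef, habdef]
    rw [h1, intervalIntegral.integral_comp_sub_left (fun w => -f w (a w)) (σ + τ)]
    have h2 : σ + τ - σ = τ := by ring
    rw [h2, intervalIntegral.integral_neg, ← intervalIntegral.integral_symm]
    exact heq _ (hmap v hv)
  have h1 := my_apriori d hστ hA₀ hK hfbm hfbgrow heqb
  have h3 : IntervalIntegrable (fun r => -fb r (ab r)) volume σ τ := h1.neg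
  have h4 : (fun r => -fb r (ab r)) =
      (fun r => (fun w => f w (a w)) (σ + τ - r)) := by
    funext r; simp [hfbdef, habdef]
  rw [h4] at h3
  simpa using (h3.comp_sub_left (σ + τ)).symm
lemma rho_eps_nonneg {d : ℕ} {ρ : Vec d → ℝ} (hρ : IsMollifier d ρ) {ε : ℝ}
    (hε : ε ∈ Set.Ioc (0:ℝ) 1) (z : Vec d) : 0 ≤ ε ^ (-(d : ℝ)) * ρ (ε⁻¹ • z) :=
  mul_nonneg (Real.rpow_nonneg hε.1.le _) (hρ.nonneg _)

lemma rho_eps_zero {d : ℕ} {ρ : Vec d → ℝ} (hρ : IsMollifier d ρ) {ε : ℝ}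
    (hε : ε ∈ Set.Ioc (0:ℝ) 1) {z : Vec d} (hz : ε < ‖z‖) : ρ (ε⁻¹ • z) = 0 := by
  have h1 : (1:ℝ) < ‖ε⁻¹ • z‖ := by
    rw [norm_smul, Real.norm_eq_abs, abs_of_pos (inv_pos.mpr hε.1),
      ← inv_mul_cancel₀ hε.1.ne']
    exact mul_lt_mul_of_pos_left hz (inv_pos.mpr hε.1)
  by_contra h
  have := hρ.support_subset (Function.mem_support.mpr h)
  rw [Metric.mem_closedBall, dist_zero_right] at this
  linarith

lemma rho_eps_cont {d : ℕ} {ρ : Vec d → ℝ} (hρ : IsMollifier d ρ) (ε : ℝ) :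
    Continuous (fun z : Vec d => ε ^ (-(d : ℝ)) * ρ (ε⁻¹ • z)) :=
  continuous_const.mul (hρ.smooth.continuous.comp (continuous_const_smul ε⁻¹))

lemma rho_eps_integrable {d : ℕ} {ρ : Vec d → ℝ} (hρ : IsMollifier d ρ) {ε : ℝ}
    (hε : ε ∈ Set.Ioc (0:ℝ) 1) :
    Integrable (fun z : Vec d => ε ^ (-(d : ℝ)) * ρ (ε⁻¹ • z)) volume := by
  apply (rho_eps_cont hρ ε).integrable_of_hasCompactSupport
  apply HasCompactSupport.intro (isCompact_closedBall (0 : Vec d) ε)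
  intro z hz
  rw [Metric.mem_closedBall, dist_zero_right, not_le] at hz
  rw [rho_eps_zero hρ hε hz, mul_zero]

lemma rho_eps_integral {d : ℕ} {ρ : Vec d → ℝ} (hρ : IsMollifier d ρ) {ε : ℝ}
    (hε : ε ∈ Set.Ioc (0:ℝ) 1) :
    (∫ z : Vec d, ε ^ (-(d : ℝ)) * ρ (ε⁻¹ • z)) = 1 := by
  rw [MeasureTheory.integral_const_mul]
  have h1 : (∫ z : Vec d, ρ (ε⁻¹ • z)) = |((ε⁻¹) ^ finrank ℝ (Vec d))⁻¹| • ∫ z : Vec d, ρ z :=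
    MeasureTheory.Measure.integral_comp_smul volume ρ ε⁻¹
  have h2 : |((ε⁻¹ : ℝ) ^ (d:ℕ))⁻¹| = ε ^ (d:ℕ) := by
    rw [abs_of_pos (inv_pos.mpr (pow_pos (inv_pos.mpr hε.1) d)), inv_pow, inv_inv]
  have h3 : (ε:ℝ) ^ (-(d:ℝ)) = ((ε:ℝ) ^ (d:ℕ))⁻¹ := by
    rw [Real.rpow_neg hε.1.le, Real.rpow_natCast]
  rw [h1, hρ.integral_eq_one, finrank_euclideanSpace_fin, smul_eq_mul, mul_one, h2, h3]
  exact inv_mul_cancel₀ (pow_pos hε.1 d).ne'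

lemma moll_est {d : ℕ} {ρ : Vec d → ℝ} (hρ : IsMollifier d ρ) {ε : ℝ}
    (hε : ε ∈ Set.Ioc (0:ℝ) 1) {u : Vec d → Vec d}
    (hu : AEStronglyMeasurable u volume) {M : ℝ} (hM : 0 ≤ M)
    (hbd : ∀ z : Vec d, ‖z‖ ≤ ε → ‖u z‖ ≤ M) :
    Integrable (fun z => (ε ^ (-(d:ℝ)) * ρ (ε⁻¹ • z)) • u z) volume ∧
    ‖∫ z, (ε ^ (-(d:ℝ)) * ρ (ε⁻¹ • z)) • u z‖ ≤ M := by
  have hbound : ∀ z : Vec d, ‖(ε ^ (-(d:ℝ)) * ρ (ε⁻¹ • z)) • u z‖ ≤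
      M * (ε ^ (-(d:ℝ)) * ρ (ε⁻¹ • z)) := by
    intro z
    rw [norm_smul, Real.norm_eq_abs, abs_of_nonneg (rho_eps_nonneg hρ hε z)]
    rcases le_or_gt ‖z‖ ε with h | h
    · rw [mul_comm M]
      exact mul_le_mul_of_nonneg_left (hbd z h) (rho_eps_nonneg hρ hε z)
    · rw [rho_eps_zero hρ hε h]
      simp
  have hgint : Integrable (fun z : Vec d => M * (ε ^ (-(d:ℝ)) * ρ (ε⁻¹ • z))) volume :=
    (rho_eps_integrable hρ hε).const_mul M
  have hsm : AEStronglyMeasurable (fun z => (ε ^ (-(d:ℝ)) * ρ (ε⁻¹ • z)) • u z) volume :=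
    ((rho_eps_cont hρ ε).aestronglyMeasurable).smul hu
  have hint : Integrable (fun z => (ε ^ (-(d:ℝ)) * ρ (ε⁻¹ • z)) • u z) volume :=
    Integrable.mono' hgint hsm (Filter.Eventually.of_forall hbound)
  refine ⟨hint, ?_⟩
  calc ‖∫ z, (ε ^ (-(d:ℝ)) * ρ (ε⁻¹ • z)) • u z‖
      ≤ ∫ z, M * (ε ^ (-(d:ℝ)) * ρ (ε⁻¹ • z)) :=
        MeasureTheory.norm_integral_le_of_norm_le hgint (Filter.Eventually.of_forall hbound)
    _ = M := by rw [MeasureTheory.integral_const_mul, rho_eps_integral hρ hε, mul_one]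

lemma moll_repr {d : ℕ} (ρ : Vec d → ℝ) (ε : ℝ) (b : ℝ → Vec d → Vec d) (t : ℝ) (x : Vec d) :
    mollifiedDrift d ρ ε b t x = ∫ z, (ε ^ (-(d:ℝ)) * ρ (ε⁻¹ • z)) • b t (x - z) := by
  rw [mollifiedDrift]
  have h1 : (fun y : Vec d => (ε ^ (-(d : ℝ)) * ρ (ε⁻¹ • (x - y))) • b t y) =
      (fun y : Vec d => (fun z => (ε ^ (-(d:ℝ)) * ρ (ε⁻¹ • z)) • b t (x - z)) (x - y)) := by
    funext y
    simp [sub_sub_cancel]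
  rw [h1, MeasureTheory.integral_sub_left_eq_self
    (fun z => (ε ^ (-(d:ℝ)) * ρ (ε⁻¹ • z)) • b t (x - z)) volume x]

section Drift

variable {d : ℕ} {ρ : Vec d → ℝ} {κ₁ : ℝ} {b : ℝ → Vec d → Vec d}

lemma bLip (hb : HolderDrift d b κ₁ 0) {t : ℝ} (ht : 0 ≤ t) (z w : Vec d) :
    ‖b t z - b t w‖ ≤ κ₁ * max 1 ‖z - w‖ := by
  have := hb.2.2 t ht z w
  rwa [Real.rpow_zero] at this

lemma bBound (hκ₁ : 0 < κ₁) (hb : HolderDrift d b κ₁ 0) {t : ℝ} (ht : 0 ≤ t) (z : Vec d) :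
    ‖b t z‖ ≤ κ₁ * (2 + ‖z‖) := by
  have h1 : ‖b t z‖ - ‖b t 0‖ ≤ ‖b t z - b t 0‖ := norm_sub_norm_le _ _
  have h2 := bLip hb ht z 0
  rw [sub_zero] at h2
  have h3 := hb.2.1 t ht
  have h4 : max 1 ‖z‖ ≤ 1 + ‖z‖ := max_le (by linarith [norm_nonneg z]) (by linarith [norm_nonneg z])
  nlinarith [norm_nonneg z]

lemma btm : ∀ (hb : HolderDrift d b κ₁ 0) (t : ℝ), Measurable (b t) := by
  intro hb t
  exact hb.1.comp (measurable_const.prodMk measurable_id)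

/-- integrability of the mollification integrand in shifted form -/
lemma moll_int1 (hρ : IsMollifier d ρ) {ε : ℝ} (hε : ε ∈ Set.Ioc (0:ℝ) 1) (hκ₁ : 0 < κ₁)
    (hb : HolderDrift d b κ₁ 0) {t : ℝ} (ht : 0 ≤ t) (x : Vec d) :
    Integrable (fun z => (ε ^ (-(d:ℝ)) * ρ (ε⁻¹ • z)) • b t (x - z)) volume ∧
    ‖∫ z, (ε ^ (-(d:ℝ)) * ρ (ε⁻¹ • z)) • b t (x - z)‖ ≤ κ₁ * (3 + ‖x‖) := by
  apply moll_est hρ hε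
  · exact ((btm hb t).comp (measurable_const.sub measurable_id)).aestronglyMeasurable
  · positivity
  · intro z hz
    have h1 := bBound hκ₁ hb ht (x - z)
    have h2 : ‖x - z‖ ≤ ‖x‖ + ‖z‖ := norm_sub_le _ _
    have h3 : ‖z‖ ≤ 1 := le_trans hz hε.2
    nlinarith

lemma E_close (hρ : IsMollifier d ρ) {ε : ℝ} (hε : ε ∈ Set.Ioc (0:ℝ) 1) (hκ₁ : 0 < κ₁)
    (hb : HolderDrift d b κ₁ 0) {t : ℝ} (ht : 0 ≤ t) (x : Vec d) :
    ‖mollifiedDrift d ρ ε b t x - b t x‖ ≤ κ₁ := by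
  rw [moll_repr]
  have hconst : Integrable (fun z => (ε ^ (-(d:ℝ)) * ρ (ε⁻¹ • z)) • b t x) volume ∧ _ :=
    moll_est hρ hε (u := fun _ => b t x) aestronglyMeasurable_const
      (M := κ₁ * (2 + ‖x‖)) (by positivity)
      (fun z _ => bBound hκ₁ hb ht x)
  have hid : b t x = ∫ z, (ε ^ (-(d:ℝ)) * ρ (ε⁻¹ • z)) • b t x := by
    rw [integral_smul_const, rho_eps_integral hρ hε, one_smul]
  rw [hid, ← MeasureTheory.integral_sub (moll_int1 hρ hε hκ₁ hb ht x).1 hconst.1]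
  have h1 : (fun z => (ε ^ (-(d:ℝ)) * ρ (ε⁻¹ • z)) • b t (x - z) -
      (ε ^ (-(d:ℝ)) * ρ (ε⁻¹ • z)) • b t x) =
      (fun z => (ε ^ (-(d:ℝ)) * ρ (ε⁻¹ • z)) • (b t (x - z) - b t x)) := by
    funext z
    rw [smul_sub]
  rw [h1]
  apply (moll_est hρ hε (u := fun z => b t (x - z) - b t x)
    ((((btm hb t).comp (measurable_const.sub measurable_id)).sub
      measurable_const).aestronglyMeasurable) hκ₁.le ?_).2
  intro z hz
  have h2 := bLip hb ht (x - z) x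
  have h3 : x - z - x = -z := by abel
  rw [h3, norm_neg] at h2
  have h4 : max 1 ‖z‖ = 1 := max_eq_left (le_trans hz hε.2)
  rw [h4, mul_one] at h2
  exact h2

lemma E1 (hρ : IsMollifier d ρ) {ε : ℝ} (hε : ε ∈ Set.Ioc (0:ℝ) 1) (hκ₁ : 0 < κ₁)
    (hb : HolderDrift d b κ₁ 0) {t : ℝ} (ht : 0 ≤ t) (x x' : Vec d) :
    ‖mollifiedDrift d ρ ε b t x - mollifiedDrift d ρ ε b t x'‖ ≤ κ₁ * (1 + ‖x - x'‖) := by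
  rw [moll_repr, moll_repr, ← MeasureTheory.integral_sub (moll_int1 hρ hε hκ₁ hb ht x).1
    (moll_int1 hρ hε hκ₁ hb ht x').1]
  have h1 : (fun z => (ε ^ (-(d:ℝ)) * ρ (ε⁻¹ • z)) • b t (x - z) -
      (ε ^ (-(d:ℝ)) * ρ (ε⁻¹ • z)) • b t (x' - z)) =
      (fun z => (ε ^ (-(d:ℝ)) * ρ (ε⁻¹ • z)) • (b t (x - z) - b t (x' - z))) := by
    funext z
    rw [smul_sub]
  rw [h1]
  have hM : 0 ≤ κ₁ * (1 + ‖x - x'‖) := by positivity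
  apply (moll_est hρ hε (u := fun z => b t (x - z) - b t (x' - z))
    ((((btm hb t).comp (measurable_const.sub measurable_id)).sub
      ((btm hb t).comp (measurable_const.sub measurable_id))).aestronglyMeasurable) hM ?_).2
  intro z hz
  have h2 := bLip hb ht (x - z) (x' - z)
  have h3 : x - z - (x' - z) = x - x' := by abel
  rw [h3] at h2
  have h4 : max 1 ‖x - x'‖ ≤ 1 + ‖x - x'‖ :=
    max_le (by linarith [norm_nonneg (x - x')]) (by linarith [norm_nonneg (x - x')])
  nlinarith

lemma E3 (hρ : IsMollifier d ρ) {ε : ℝ} (hε : ε ∈ Set.Ioc (0:ℝ) 1) (hκ₁ : 0 < κ₁)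
    (hb : HolderDrift d b κ₁ 0) {t : ℝ} (ht : 0 ≤ t) (x : Vec d) :
    ‖mollifiedDrift d ρ ε b t x‖ ≤ 3 * κ₁ + κ₁ * ‖x‖ := by
  have h1 := E_close hρ hε hκ₁ hb ht x
  have h2 := bBound hκ₁ hb ht x
  have h3 : ‖mollifiedDrift d ρ ε b t x‖ - ‖b t x‖ ≤
      ‖mollifiedDrift d ρ ε b t x - b t x‖ := norm_sub_norm_le _ _
  nlinarith

lemma E2 (hρ : IsMollifier d ρ) {ε : ℝ} (hε : ε ∈ Set.Ioc (0:ℝ) 1) (hκ₁ : 0 < κ₁)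
    (hb : HolderDrift d b κ₁ 0) {t : ℝ} (ht : 0 ≤ t) (x : Vec d) :
    ‖mollifiedDrift d ρ ε b t x - mollifiedDrift d ρ 1 b t x‖ ≤ 2 * κ₁ := by
  have h1 := E_close hρ hε hκ₁ hb ht x
  have h2 := E_close hρ (by norm_num : (1:ℝ) ∈ Set.Ioc (0:ℝ) 1) hκ₁ hb ht x
  have h3 : ‖mollifiedDrift d ρ ε b t x - mollifiedDrift d ρ 1 b t x‖ ≤
      ‖mollifiedDrift d ρ ε b t x - b t x‖ + ‖mollifiedDrift d ρ 1 b t x - b t x‖ := by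
    rw [show mollifiedDrift d ρ ε b t x - mollifiedDrift d ρ 1 b t x =
      (mollifiedDrift d ρ ε b t x - b t x) - (mollifiedDrift d ρ 1 b t x - b t x) by abel]
    exact norm_sub_le _ _
  linarith

lemma Emeas (hρ : IsMollifier d ρ) (ε : ℝ) (hb : HolderDrift d b κ₁ 0) :
    StronglyMeasurable (Function.uncurry (mollifiedDrift d ρ ε b)) := by
  have h1 : StronglyMeasurable (fun p : (ℝ × Vec d) × Vec d =>
      (ε ^ (-(d:ℝ)) * ρ (ε⁻¹ • (p.1.2 - p.2))) • b p.1.1 p.2) := by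
    apply Measurable.stronglyMeasurable
    refine Measurable.smul (f := fun p : (ℝ × Vec d) × Vec d => ε ^ (-(d:ℝ)) * ρ (ε⁻¹ • (p.1.2 - p.2))) (g := fun p : (ℝ × Vec d) × Vec d => b p.1.1 p.2) ?_ ?_
    · apply Measurable.const_mul
      apply (hρ.smooth.continuous.measurable).comp
      exact measurable_const_smul _ |>.comp ((measurable_fst.snd).sub measurable_snd)
    · exact hb.1.comp ((measurable_fst.fst).prodMk measurable_snd)
  exact MeasureTheory.StronglyMeasurable.integral_prod_right' (ν := volume) h1

end Drift

/-- Basic regularity of a flow curve between two times, anchored at either endpoint. -/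
lemma flow_basic (d : ℕ) {f : ℝ → Vec d → Vec d} {θ' : ℝ → ℝ → Vec d → Vec d}
    (hfl : IsFlow d f θ') (hfm : StronglyMeasurable (Function.uncurry f))
    {A₀ K : ℝ} (hA₀ : 0 ≤ A₀) (hK : 0 ≤ K)
    (hgrow : ∀ r, 0 ≤ r → ∀ z : Vec d, ‖f r z‖ ≤ A₀ + K * ‖z‖)
    {σ τ s₀ : ℝ} (hσ : 0 ≤ σ) (hστ : σ ≤ τ) (hanchor : s₀ = σ ∨ s₀ = τ) (x : Vec d) :
    IntervalIntegrable (fun r => f r (θ' r s₀ x)) volume σ τ ∧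
    ∀ u ∈ Set.Icc σ τ, θ' u s₀ x = θ' σ s₀ x + ∫ r in σ..u, f r (θ' r s₀ x) := by
  have hs0 : 0 ≤ s₀ := by rcases hanchor with h | h <;> subst h <;> linarith
  have heqf : ∀ u ∈ Set.Icc σ τ, θ' u s₀ x = x + ∫ r in s₀..u, f r (θ' r s₀ x) :=
    fun u hu => hfl s₀ u hs0 (le_trans hσ hu.1) x
  have hgrow' : ∀ r ∈ Set.Icc σ τ, ∀ z : Vec d, ‖f r z‖ ≤ A₀ + K * ‖z‖ :=
    fun r hr z => hgrow r (le_trans hσ hr.1) z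
  have hσIcc : σ ∈ Set.Icc σ τ := Set.left_mem_Icc.mpr hστ
  rcases hanchor with h | h
  · subst h
    have hint := my_apriori d hστ hA₀ hK hfm hgrow' (x := x)
      (a := fun u => θ' u s₀ x) heqf
    refine ⟨hint, ?_⟩
    intro u hu
    have hσσ : θ' s₀ s₀ x = x := by
      have := heqf s₀ hσIcc
      rwa [intervalIntegral.integral_same, add_zero] at this
    rw [heqf u hu, hσσ]
  · subst h
    have hint := my_apriori_backward d hστ hA₀ hK hfm hgrow' (x := x)
      (a := fun u => θ' u s₀ x) heqf
    refine ⟨hint, ?_⟩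
    intro u hu
    have h1 : IntervalIntegrable (fun r => f r (θ' r s₀ x)) volume s₀ σ := hint.symm
    have h2 : IntervalIntegrable (fun r => f r (θ' r s₀ x)) volume σ u := by
      apply hint.mono_set
      rw [uIcc_of_le hστ]
      exact uIcc_subset_Icc hσIcc hu
    rw [heqf u hu, heqf σ hσIcc, add_assoc,
      intervalIntegral.integral_add_adjacent_intervals h1 h2]

/-- Final arithmetic assembly. -/
lemma assemble {κ₁ T P Q R D : ℝ} (hκ₁ : 0 < κ₁) (hE1 : 1 ≤ Real.exp (κ₁ * T))
    (hP : 0 ≤ P) (hQ : 0 ≤ Q) (hR : 0 ≤ R) (hD : 0 ≤ D)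
    (F1 : Q ≤ P + 3*κ₁*D*Real.exp (κ₁*T)) (F1' : P ≤ Q + 3*κ₁*D*Real.exp (κ₁*T))
    (F2 : P ≤ (R + κ₁*D)*Real.exp (κ₁*T)) (F2' : R ≤ (P + κ₁*D)*Real.exp (κ₁*T)) :
    (((1 + 3*κ₁) * Real.exp (κ₁*T))⁻¹ * (P + D) ≤ Q + D ∧
      Q + D ≤ ((1 + 3*κ₁) * Real.exp (κ₁*T)) * (P + D)) ∧
    (((1 + 3*κ₁) * Real.exp (κ₁*T))⁻¹ * (R + D) ≤ P + D ∧
      P + D ≤ ((1 + 3*κ₁) * Real.exp (κ₁*T)) * (R + D)) := by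
  set E := Real.exp (κ₁*T) with hE
  have hE0 : (0:ℝ) ≤ E := by linarith
  have hC0 : 0 < (1 + 3*κ₁) * E := by nlinarith
  have k1 := mul_nonneg hP (by linarith : (0:ℝ) ≤ E - 1)
  have k2 := mul_nonneg hQ (by linarith : (0:ℝ) ≤ E - 1)
  have k3 := mul_nonneg hR (by linarith : (0:ℝ) ≤ E - 1)
  have k4 := mul_nonneg hD (by linarith : (0:ℝ) ≤ E - 1)
  have k5 := mul_nonneg (mul_nonneg hκ₁.le hP) hE0
  have k6 := mul_nonneg (mul_nonneg hκ₁.le hQ) hE0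
  have k7 := mul_nonneg (mul_nonneg hκ₁.le hR) hE0
  have k8 := mul_nonneg (mul_nonneg hκ₁.le hD) hE0
  refine ⟨⟨?_, ?_⟩, ⟨?_, ?_⟩⟩
  · rw [inv_mul_le_iff₀ hC0]
    nlinarith
  · nlinarith
  · rw [inv_mul_le_iff₀ hC0]
    nlinarith
  · nlinarith

end Aux

set_option maxHeartbeats 1000000 in
/-- **Equivalence of flows.** -/
theorem equivalence_of_flows
    (d : ℕ) (ρ : Vec d → ℝ) (hρ : IsMollifier d ρ) (κ₁ : ℝ) (hκ₁ : 0 < κ₁)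
    (b : ℝ → Vec d → Vec d) (hb : HolderDrift d b κ₁ 0)
    (θ : ℝ → ℝ → ℝ → Vec d → Vec d)
    (hθ : ∀ ε ∈ Set.Ioc (0 : ℝ) 1, IsFlow d (mollifiedDrift d ρ ε b) (θ ε))
    (T : ℝ) (hT : 0 < T) :
    ∃ C : ℝ, 1 ≤ C ∧
      ∀ ε ∈ Set.Ioc (0 : ℝ) 1, ∀ s t : ℝ, 0 ≤ s → 0 ≤ t → |t - s| ≤ T → ∀ x y : Vec d,
        (C⁻¹ * (‖θ ε t s x - y‖ + |t - s|) ≤ ‖θ 1 t s x - y‖ + |t - s| ∧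
          ‖θ 1 t s x - y‖ + |t - s| ≤ C * (‖θ ε t s x - y‖ + |t - s|)) ∧
        (C⁻¹ * (‖x - θ ε s t y‖ + |t - s|) ≤ ‖θ ε t s x - y‖ + |t - s| ∧
          ‖θ ε t s x - y‖ + |t - s| ≤ C * (‖x - θ ε s t y‖ + |t - s|)) := by
  have h1in : (1:ℝ) ∈ Set.Ioc (0:ℝ) 1 := by norm_num
  have hE1 : 1 ≤ Real.exp (κ₁ * T) := by
    rw [← Real.exp_zero]
    exact Real.exp_le_exp.mpr (by positivity)
  refine ⟨(1 + 3*κ₁) * Real.exp (κ₁ * T), by nlinarith, ?_⟩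
  intro ε hε s t hs ht hts x y
  have h3κ : (0:ℝ) ≤ 3*κ₁ := by positivity
  have hgε : ∀ r, 0 ≤ r → ∀ z : Vec d, ‖mollifiedDrift d ρ ε b r z‖ ≤ 3*κ₁ + κ₁*‖z‖ :=
    fun r hr z => E3 hρ hε hκ₁ hb hr z
  have hg1 : ∀ r, 0 ≤ r → ∀ z : Vec d, ‖mollifiedDrift d ρ 1 b r z‖ ≤ 3*κ₁ + κ₁*‖z‖ :=
    fun r hr z => E3 hρ h1in hκ₁ hb hr z
  -- endpoint identities
  have hass : θ ε s s x = x := by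
    have := hθ ε hε s s hs hs x
    rwa [intervalIntegral.integral_same, add_zero] at this
  have h1ss : θ 1 s s x = x := by
    have := hθ 1 h1in s s hs hs x
    rwa [intervalIntegral.integral_same, add_zero] at this
  have hctt : θ ε t t y = y := by
    have := hθ ε hε t t ht ht y
    rwa [intervalIntegral.integral_same, add_zero] at this
  have habs : ∀ (A B w : Vec d), ‖A - w‖ ≤ ‖B - w‖ + ‖A - B‖ := by
    intro A B w
    have h1 := norm_sub_norm_le (A - w) (B - w)
    have h2 : (A - w) - (B - w) = A - B := by abel
    rw [h2] at h1; linarith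
  have hDnn : (0:ℝ) ≤ |t - s| := abs_nonneg _
  rcases le_total s t with hst | hst
  · -- branch A : σ = s, τ = t
    have hD : |t - s| = t - s := abs_of_nonneg (by linarith)
    have hexp : Real.exp (κ₁ * (t - s)) ≤ Real.exp (κ₁ * T) :=
      Real.exp_le_exp.mpr (by nlinarith [hts, hD.symm.trans_le hts])
    obtain ⟨hIa, hEa⟩ := flow_basic d (hθ ε hε) (Emeas hρ ε hb) h3κ hκ₁.le hgε
      (σ := s) (τ := t) (s₀ := s) hs hst (Or.inl rfl) x
    obtain ⟨hI1, hE1'⟩ := flow_basic d (hθ 1 h1in) (Emeas hρ 1 hb) h3κ hκ₁.le hg1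
      (σ := s) (τ := t) (s₀ := s) hs hst (Or.inl rfl) x
    obtain ⟨hIc, hEc⟩ := flow_basic d (hθ ε hε) (Emeas hρ ε hb) h3κ hκ₁.le hgε
      (σ := s) (τ := t) (s₀ := t) hs hst (Or.inr rfl) y
    have hcross1 : ∀ r ∈ Set.Icc s t,
        ‖mollifiedDrift d ρ ε b r (θ ε r s x) - mollifiedDrift d ρ 1 b r (θ 1 r s x)‖ ≤
        3*κ₁ + κ₁ * ‖θ ε r s x - θ 1 r s x‖ := by
      intro r hr
      have hr0 : 0 ≤ r := le_trans hs hr.1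
      have h1 := E1 hρ hε hκ₁ hb hr0 (θ ε r s x) (θ 1 r s x)
      have h2 := E2 hρ hε hκ₁ hb hr0 (θ 1 r s x)
      have h3 : ‖mollifiedDrift d ρ ε b r (θ ε r s x) - mollifiedDrift d ρ 1 b r (θ 1 r s x)‖ ≤
          ‖mollifiedDrift d ρ ε b r (θ ε r s x) - mollifiedDrift d ρ ε b r (θ 1 r s x)‖ +
          ‖mollifiedDrift d ρ ε b r (θ 1 r s x) - mollifiedDrift d ρ 1 b r (θ 1 r s x)‖ := by
        rw [show mollifiedDrift d ρ ε b r (θ ε r s x) - mollifiedDrift d ρ 1 b r (θ 1 r s x) =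
          (mollifiedDrift d ρ ε b r (θ ε r s x) - mollifiedDrift d ρ ε b r (θ 1 r s x)) +
          (mollifiedDrift d ρ ε b r (θ 1 r s x) - mollifiedDrift d ρ 1 b r (θ 1 r s x)) by abel]
        exact norm_add_le _ _
      nlinarith
    have hcross2 : ∀ r ∈ Set.Icc s t,
        ‖mollifiedDrift d ρ ε b r (θ ε r s x) - mollifiedDrift d ρ ε b r (θ ε r t y)‖ ≤
        κ₁ + κ₁ * ‖θ ε r s x - θ ε r t y‖ := by
      intro r hr
      have hr0 : 0 ≤ r := le_trans hs hr.1
      have h1 := E1 hρ hε hκ₁ hb hr0 (θ ε r s x) (θ ε r t y)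
      nlinarith
    have hcomp1 := my_comp d hst hκ₁.le h3κ hIa hI1 hEa hE1' hcross1
    have hcomp2 := my_comp d hst hκ₁.le hκ₁.le hIa hIc hEa hEc hcross2
    -- Δ bound
    have hΔ : ‖θ ε t s x - θ 1 t s x‖ ≤ 3*κ₁* |t - s| * Real.exp (κ₁*T) := by
      have h1 := hcomp1.1
      rw [hass, h1ss, sub_self, norm_zero, zero_add] at h1
      calc ‖θ ε t s x - θ 1 t s x‖ ≤ 3*κ₁*(t-s) * Real.exp (κ₁*(t-s)) := h1
        _ ≤ 3*κ₁* |t - s| * Real.exp (κ₁*T) := by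
            rw [hD]
            exact mul_le_mul_of_nonneg_left hexp (by nlinarith)
    have F1 : ‖θ 1 t s x - y‖ ≤ ‖θ ε t s x - y‖ + 3*κ₁* |t - s| * Real.exp (κ₁*T) := by
      have := habs (θ 1 t s x) (θ ε t s x) y
      rw [norm_sub_rev (θ 1 t s x) (θ ε t s x)] at this
      linarith
    have F1' : ‖θ ε t s x - y‖ ≤ ‖θ 1 t s x - y‖ + 3*κ₁* |t - s| * Real.exp (κ₁*T) := by
      have := habs (θ ε t s x) (θ 1 t s x) y
      linarith
    have F2 : ‖θ ε t s x - y‖ ≤ (‖x - θ ε s t y‖ + κ₁* |t - s|)*Real.exp (κ₁*T) := by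
      have h1 := hcomp2.1
      rw [hctt, hass] at h1
      calc ‖θ ε t s x - y‖ ≤ (‖x - θ ε s t y‖ + κ₁*(t-s)) * Real.exp (κ₁*(t-s)) := h1
        _ ≤ (‖x - θ ε s t y‖ + κ₁* |t - s|)*Real.exp (κ₁*T) := by
            rw [hD]
            exact mul_le_mul_of_nonneg_left hexp
              (by nlinarith [norm_nonneg (x - θ ε s t y)])
    have F2' : ‖x - θ ε s t y‖ ≤ (‖θ ε t s x - y‖ + κ₁* |t - s|)*Real.exp (κ₁*T) := by
      have h1 := hcomp2.2
      rw [hctt, hass] at h1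
      calc ‖x - θ ε s t y‖ ≤ (‖θ ε t s x - y‖ + κ₁*(t-s)) * Real.exp (κ₁*(t-s)) := h1
        _ ≤ (‖θ ε t s x - y‖ + κ₁* |t - s|)*Real.exp (κ₁*T) := by
            rw [hD]
            exact mul_le_mul_of_nonneg_left hexp
              (by nlinarith [norm_nonneg (θ ε t s x - y)])
    exact assemble hκ₁ hE1 (norm_nonneg _) (norm_nonneg _) (norm_nonneg _) hDnn F1 F1' F2 F2'
  · -- branch B : σ = t, τ = s
    have hD : |t - s| = s - t := by
      rw [abs_sub_comm]
      exact abs_of_nonneg (by linarith)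
    have hexp : Real.exp (κ₁ * (s - t)) ≤ Real.exp (κ₁ * T) :=
      Real.exp_le_exp.mpr (by nlinarith [hts, hD.symm.trans_le hts])
    obtain ⟨hIa, hEa⟩ := flow_basic d (hθ ε hε) (Emeas hρ ε hb) h3κ hκ₁.le hgε
      (σ := t) (τ := s) (s₀ := s) ht hst (Or.inr rfl) x
    obtain ⟨hI1, hE1'⟩ := flow_basic d (hθ 1 h1in) (Emeas hρ 1 hb) h3κ hκ₁.le hg1
      (σ := t) (τ := s) (s₀ := s) ht hst (Or.inr rfl) x
    obtain ⟨hIc, hEc⟩ := flow_basic d (hθ ε hε) (Emeas hρ ε hb) h3κ hκ₁.le hgε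
      (σ := t) (τ := s) (s₀ := t) ht hst (Or.inl rfl) y
    have hcross1 : ∀ r ∈ Set.Icc t s,
        ‖mollifiedDrift d ρ ε b r (θ ε r s x) - mollifiedDrift d ρ 1 b r (θ 1 r s x)‖ ≤
        3*κ₁ + κ₁ * ‖θ ε r s x - θ 1 r s x‖ := by
      intro r hr
      have hr0 : 0 ≤ r := le_trans ht hr.1
      have h1 := E1 hρ hε hκ₁ hb hr0 (θ ε r s x) (θ 1 r s x)
      have h2 := E2 hρ hε hκ₁ hb hr0 (θ 1 r s x)
      have h3 : ‖mollifiedDrift d ρ ε b r (θ ε r s x) - mollifiedDrift d ρ 1 b r (θ 1 r s x)‖ ≤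
          ‖mollifiedDrift d ρ ε b r (θ ε r s x) - mollifiedDrift d ρ ε b r (θ 1 r s x)‖ +
          ‖mollifiedDrift d ρ ε b r (θ 1 r s x) - mollifiedDrift d ρ 1 b r (θ 1 r s x)‖ := by
        rw [show mollifiedDrift d ρ ε b r (θ ε r s x) - mollifiedDrift d ρ 1 b r (θ 1 r s x) =
          (mollifiedDrift d ρ ε b r (θ ε r s x) - mollifiedDrift d ρ ε b r (θ 1 r s x)) +
          (mollifiedDrift d ρ ε b r (θ 1 r s x) - mollifiedDrift d ρ 1 b r (θ 1 r s x)) by abel]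
        exact norm_add_le _ _
      nlinarith
    have hcross2 : ∀ r ∈ Set.Icc t s,
        ‖mollifiedDrift d ρ ε b r (θ ε r s x) - mollifiedDrift d ρ ε b r (θ ε r t y)‖ ≤
        κ₁ + κ₁ * ‖θ ε r s x - θ ε r t y‖ := by
      intro r hr
      have hr0 : 0 ≤ r := le_trans ht hr.1
      have h1 := E1 hρ hε hκ₁ hb hr0 (θ ε r s x) (θ ε r t y)
      nlinarith
    have hcomp1 := my_comp d hst hκ₁.le h3κ hIa hI1 hEa hE1' hcross1
    have hcomp2 := my_comp d hst hκ₁.le hκ₁.le hIa hIc hEa hEc hcross2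
    have hΔ : ‖θ ε t s x - θ 1 t s x‖ ≤ 3*κ₁* |t - s| * Real.exp (κ₁*T) := by
      have h1 := hcomp1.2
      rw [hass, h1ss, sub_self, norm_zero, zero_add] at h1
      calc ‖θ ε t s x - θ 1 t s x‖ ≤ 3*κ₁*(s-t) * Real.exp (κ₁*(s-t)) := h1
        _ ≤ 3*κ₁* |t - s| * Real.exp (κ₁*T) := by
            rw [hD]
            exact mul_le_mul_of_nonneg_left hexp (by nlinarith)
    have F1 : ‖θ 1 t s x - y‖ ≤ ‖θ ε t s x - y‖ + 3*κ₁* |t - s| * Real.exp (κ₁*T) := by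
      have := habs (θ 1 t s x) (θ ε t s x) y
      rw [norm_sub_rev (θ 1 t s x) (θ ε t s x)] at this
      linarith
    have F1' : ‖θ ε t s x - y‖ ≤ ‖θ 1 t s x - y‖ + 3*κ₁* |t - s| * Real.exp (κ₁*T) := by
      have := habs (θ ε t s x) (θ 1 t s x) y
      linarith
    have F2 : ‖θ ε t s x - y‖ ≤ (‖x - θ ε s t y‖ + κ₁* |t - s|)*Real.exp (κ₁*T) := by
      have h1 := hcomp2.2
      rw [hctt, hass] at h1
      calc ‖θ ε t s x - y‖ ≤ (‖x - θ ε s t y‖ + κ₁*(s-t)) * Real.exp (κ₁*(s-t)) := h1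
        _ ≤ (‖x - θ ε s t y‖ + κ₁* |t - s|)*Real.exp (κ₁*T) := by
            rw [hD]
            exact mul_le_mul_of_nonneg_left hexp
              (by nlinarith [norm_nonneg (x - θ ε s t y)])
    have F2' : ‖x - θ ε s t y‖ ≤ (‖θ ε t s x - y‖ + κ₁* |t - s|)*Real.exp (κ₁*T) := by
      have h1 := hcomp2.1
      rw [hctt, hass] at h1
      calc ‖x - θ ε s t y‖ ≤ (‖θ ε t s x - y‖ + κ₁*(s-t)) * Real.exp (κ₁*(s-t)) := h1
        _ ≤ (‖θ ε t s x - y‖ + κ₁* |t - s|)*Real.exp (κ₁*T) := by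
            rw [hD]
            exact mul_le_mul_of_nonneg_left hexp
              (by nlinarith [norm_nonneg (θ ε t s x - y)])
    exact assemble hκ₁ hE1 (norm_nonneg _) (norm_nonneg _) (norm_nonneg _) hDnn F1 F1' F2 F2'
end
end

section
/- (Chaining claim for the lower bound.) Let b be measurable, bounded at the origin uniformly in time, and Lipschitz in space with constant κ uniformly in time, and let θ denote its flow. Let x, y ∈ ℝ^d be such that |θ_{1,0}(x) − y| > 1, and let M be the smallest integer with 4·e^{2κ}·|θ_{1,0}(x) − y|² < M (so that M − 1 ≤ 4·e^{2κ}·|θ_{1,0}(x) − y|² < M). Set t_j := j/M for j = 0,1,…,M. Then there exist points ξ₀, ξ₁, …, ξ_M ∈ ℝ^d with ξ₀ = x and ξ_M = y such that |ξ_{j+1} − θ_{t_{j+1}, t_j}(ξ_j)| ≤ 1/(2√M) for every j = 0,1,…,M−1. -/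
noncomputable section

open MeasureTheory Matrix Set

lemma gron {φ : ℝ → ℝ} {p q a K : ℝ} (hpq : p ≤ q) (hK : 0 ≤ K) (ha : 0 ≤ a)
    (hc : ContinuousOn φ (Icc p q)) (hpos : ∀ t ∈ Icc p q, 0 ≤ φ t)
    (hyp : ∀ t ∈ Icc p q, φ t ≤ a + K * ∫ r in p..t, φ r) :
    ∀ t ∈ Icc p q, φ t ≤ a * Real.exp (K * (t - p)) := by
  set φ' : ℝ → ℝ := Set.IccExtend hpq ((Icc p q).restrict φ) with hφ'def
  have hφ'c : Continuous φ' := (continuousOn_iff_continuous_restrict.mp hc).Icc_extend'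
  have hφ'eq : ∀ t ∈ Icc p q, φ' t = φ t := fun t ht => by
    simp [hφ'def, Set.IccExtend_of_mem hpq _ ht]
    rfl
  have hint : ∀ t ∈ Icc p q, (∫ r in p..t, φ' r) = ∫ r in p..t, φ r := by
    intro t ht
    refine intervalIntegral.integral_congr (fun r hr => hφ'eq r ?_)
    have : uIcc p t ⊆ Icc p q := by
      rw [uIcc_of_le ht.1]
      exact Icc_subset_Icc le_rfl ht.2
    exact this hr
  set ψ : ℝ → ℝ := fun t => a + K * ∫ r in p..t, φ' r with hψdef
  have hψd : ∀ t : ℝ, HasDerivAt ψ (K * φ' t) t := by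
    intro t
    exact ((intervalIntegral.integral_hasDerivAt_right (hφ'c.intervalIntegrable p t)
      (hφ'c.stronglyMeasurableAtFilter _ _) hφ'c.continuousAt).const_mul K).const_add a
  have hψc : ContinuousOn ψ (Icc p q) := fun t _ => ((hψd t).continuousAt).continuousWithinAt
  have hφψ : ∀ t ∈ Icc p q, φ t ≤ ψ t := by
    intro t ht
    rw [hψdef]; simp only
    rw [hint t ht]
    exact hyp t ht
  have key := norm_le_gronwallBound_of_norm_deriv_right_le (f := ψ) (f' := fun t => K * φ' t)
      (δ := a) (K := K) (ε := 0) hψc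
      (fun t _ => (hψd t).hasDerivWithinAt)
      (by simp [hψdef, Real.norm_eq_abs, abs_of_nonneg ha])
      (by
        intro t ht
        have ht' : t ∈ Icc p q := Ico_subset_Icc_self ht
        have h1 : 0 ≤ φ' t := by rw [hφ'eq t ht']; exact hpos t ht'
        have h2 : φ' t ≤ ψ t := by rw [hφ'eq t ht']; exact hφψ t ht'
        have h3 : ψ t ≤ ‖ψ t‖ := le_abs_self _
        rw [Real.norm_eq_abs, abs_of_nonneg (by positivity)]
        calc K * φ' t ≤ K * ‖ψ t‖ := by nlinarith [abs_nonneg (ψ t)]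
        _ = K * ‖ψ t‖ + 0 := by ring)
  intro t ht
  have := key t ht
  rw [gronwallBound_ε0] at this
  calc φ t ≤ ψ t := hφψ t ht
  _ ≤ ‖ψ t‖ := le_abs_self _
  _ ≤ a * Real.exp (K * (t - p)) := this

lemma boot {d : ℕ} {p q : ℝ} (hpq : p ≤ q) {κ C : ℝ} (hκ : 0 ≤ κ)
    (B : ℝ → Vec d → Vec d) (hmeas : Measurable (Function.uncurry B))
    (hC : ∀ r ∈ Icc p q, ‖B r 0‖ ≤ C)
    (hLip : ∀ r ∈ Icc p q, ∀ z w : Vec d, ‖B r z - B r w‖ ≤ κ * ‖z - w‖)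
    (F : ℝ → Vec d)
    (hF : ∀ t ∈ Icc p q, F t = F p + ∫ r in p..t, B r (F r)) :
    IntervalIntegrable (fun r => B r (F r)) volume p q := by
  set h : ℝ → Vec d := fun r => B r (F r) with hh
  by_contra hbad
  have hC0 : 0 ≤ C := (norm_nonneg _).trans (hC q ⟨hpq, le_rfl⟩)
  have hnorm : ∀ r ∈ Icc p q, ∀ z : Vec d, ‖B r z‖ ≤ C + κ * ‖z‖ := by
    intro r hr z
    calc ‖B r z‖ = ‖(B r z - B r 0) + B r 0‖ := by rw [sub_add_cancel]
    _ ≤ ‖B r z - B r 0‖ + ‖B r 0‖ := norm_add_le _ _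
    _ ≤ κ * ‖z - 0‖ + C := add_le_add (hLip r hr z 0) (hC r hr)
    _ = C + κ * ‖z‖ := by rw [sub_zero]; ring
  set Bad : Set ℝ := {t | t ∈ Icc p q ∧ ¬ IntervalIntegrable h volume p t} with hBadDef
  have hqBad : q ∈ Bad := ⟨⟨hpq, le_rfl⟩, hbad⟩
  have hne : Bad.Nonempty := ⟨q, hqBad⟩
  have hbdd : BddBelow Bad := ⟨p, fun t ht => ht.1.1⟩
  set τ := sInf Bad with hτdef
  have hτmem : τ ∈ Icc p q := ⟨le_csInf hne (fun t ht => ht.1.1), csInf_le hbdd hqBad⟩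
  have good : ∀ t ∈ Ico p τ, IntervalIntegrable h volume p t := by
    intro t ht
    by_contra hng
    exact absurd (csInf_le hbdd ⟨⟨ht.1, ht.2.le.trans hτmem.2⟩, hng⟩) (not_le.mpr ht.2)
  have upward : ∀ t ∈ Icc p q, τ < t → ¬ IntervalIntegrable h volume p t := by
    intro t ht hlt hint
    have hall : ∀ u ∈ Bad, t ≤ u := by
      intro u hu
      by_contra hul
      push_neg at hul
      refine hu.2 (hint.mono_set ?_)
      rw [uIcc_of_le hu.1.1, uIcc_of_le ht.1]
      exact Icc_subset_Icc le_rfl hul.le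
    exact absurd (le_csInf hne hall) (not_le.mpr hlt)
  have const : ∀ t ∈ Icc p q, τ < t → F t = F p := by
    intro t ht hlt
    rw [hF t ht, intervalIntegral.integral_undef (upward t ht hlt), add_zero]
  -- Part 2: integrable on (τ, q]
  have part2 : IntegrableOn h (Ioc τ q) volume := by
    have hsub : Ioc τ q ⊆ Icc p q := fun r hr => ⟨hτmem.1.trans hr.1.le, hr.2⟩
    have hg : IntegrableOn (fun r => B r (F p)) (Ioc τ q) volume := by
      refine Integrable.mono' (integrable_const (C + κ * ‖F p‖)) ?_ ?_
      · exact ((hmeas.comp (measurable_id.prodMk measurable_const)).aemeasurable).aestronglyMeasurable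
      · exact (ae_restrict_iff' measurableSet_Ioc).mpr
          (Filter.Eventually.of_forall fun r hr => hnorm r (hsub hr) (F p))
    refine hg.congr_fun (fun r hr => ?_) measurableSet_Ioc
    show B r (F p) = B r (F r)
    rw [const r (hsub hr) hr.1]
  -- continuity of F on [p, t₁] for t₁ < τ
  have contF : ∀ t₁ ∈ Ico p τ, ContinuousOn F (Icc p t₁) := by
    intro t₁ ht₁
    have hi := good t₁ ht₁
    have hcont : ContinuousOn (fun t => F p + ∫ r in p..t, h r) (Icc p t₁) := by
      refine continuousOn_const.add ?_
      have := intervalIntegral.continuousOn_primitive_interval' hi left_mem_uIcc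
      rwa [uIcc_of_le ht₁.1] at this
    refine hcont.congr (fun t ht => ?_)
    exact hF t ⟨ht.1, ht.2.trans (ht₁.2.le.trans hτmem.2)⟩
  -- uniform bound on [p, τ)
  set a₀ : ℝ := ‖F p‖ + C * (q - p) with ha₀def
  have ha₀ : 0 ≤ a₀ := by
    have h1 : 0 ≤ C * (q - p) := mul_nonneg hC0 (by linarith)
    have h2 : (0:ℝ) ≤ ‖F p‖ := norm_nonneg _
    rw [ha₀def]; linarith
  set Bd : ℝ := a₀ * Real.exp (κ * (q - p)) with hBdDef
  have bdF : ∀ t₁ ∈ Ico p τ, ∀ t ∈ Icc p t₁, ‖F t‖ ≤ Bd := by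
    intro t₁ ht₁
    have hcn : ContinuousOn (fun t => ‖F t‖) (Icc p t₁) := (contF t₁ ht₁).norm
    have hIccsub : Icc p t₁ ⊆ Icc p q := Icc_subset_Icc le_rfl (ht₁.2.le.trans hτmem.2)
    have key := gron (p := p) (q := t₁) ht₁.1 hκ ha₀ hcn (fun t _ => norm_nonneg _) ?_
    · intro t ht
      calc ‖F t‖ ≤ a₀ * Real.exp (κ * (t - p)) := key t ht
      _ ≤ Bd := by
          rw [hBdDef]
          have h2 : t - p ≤ q - p := by have := (hIccsub ht).2; linarith
          gcongr
    · intro t ht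
      have htq : t ∈ Icc p q := hIccsub ht
      have h1 : F t = F p + ∫ r in p..t, h r := hF t htq
      have hit : IntervalIntegrable h volume p t := by
        refine (good t₁ ht₁).mono_set ?_
        rw [uIcc_of_le ht.1, uIcc_of_le ht₁.1]
        exact Icc_subset_Icc le_rfl ht.2
      have hκFint : IntervalIntegrable (fun r => κ * ‖F r‖) volume p t := by
        apply ContinuousOn.intervalIntegrable
        rw [uIcc_of_le ht.1]
        exact continuousOn_const.mul (((contF t₁ ht₁).mono (Icc_subset_Icc le_rfl ht.2)).norm)
      have hRHSint : IntervalIntegrable (fun r => C + κ * ‖F r‖) volume p t :=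
        intervalIntegrable_const.add hκFint
      have step : (∫ r in p..t, ‖h r‖) ≤ ∫ r in p..t, (C + κ * ‖F r‖) := by
        refine intervalIntegral.integral_mono_on ht.1 hit.norm hRHSint (fun r hr => ?_)
        exact hnorm r ⟨hr.1, hr.2.trans htq.2⟩ (F r)
      have split : (∫ r in p..t, (C + κ * ‖F r‖)) = C * (t - p) + κ * ∫ r in p..t, ‖F r‖ := by
        rw [intervalIntegral.integral_add intervalIntegrable_const hκFint,
          intervalIntegral.integral_const, intervalIntegral.integral_const_mul, smul_eq_mul]
        ring
      calc ‖F t‖ = ‖F p + ∫ r in p..t, h r‖ := by rw [← h1]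
      _ ≤ ‖F p‖ + ‖∫ r in p..t, h r‖ := norm_add_le _ _
      _ ≤ ‖F p‖ + ∫ r in p..t, ‖h r‖ := by
          have := intervalIntegral.norm_integral_le_integral_norm (f := h) (μ := volume) ht.1
          linarith
      _ ≤ ‖F p‖ + ∫ r in p..t, (C + κ * ‖F r‖) := by linarith
      _ = ‖F p‖ + (C * (t - p) + κ * ∫ r in p..t, ‖F r‖) := by rw [split]
      _ ≤ a₀ + κ * ∫ r in p..t, ‖F r‖ := by
          have h3 : C * (t - p) ≤ C * (q - p) := by
            have := htq.2
            apply mul_le_mul_of_nonneg_left (by linarith) hC0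
          rw [ha₀def]; linarith
  -- continuity on [p, τ)
  have contF2 : ContinuousOn F (Ico p τ) := by
    intro t ht
    obtain ⟨t₁, htt₁, ht₁τ⟩ := exists_between ht.2
    have ht₁' : t₁ ∈ Ico p τ := ⟨ht.1.trans htt₁.le, ht₁τ⟩
    have h1 : ContinuousWithinAt F (Icc p t₁) t := contF t₁ ht₁' t ⟨ht.1, htt₁.le⟩
    have h2 : ContinuousWithinAt F (Ico p τ ∩ Iio t₁) t :=
      h1.mono (fun u hu => ⟨hu.1.1, hu.2.le⟩)
    exact (continuousWithinAt_inter (Iio_mem_nhds htt₁)).mp h2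
  -- Part 1: integrable on (p, τ]
  have part1 : IntegrableOn h (Ioc p τ) volume := by
    rcases eq_or_lt_of_le hτmem.1 with heq | hlt
    · rw [← heq]
      simp
    · have hmeasF : AEMeasurable F (volume.restrict (Ico p τ)) :=
        contF2.aemeasurable measurableSet_Ico
      have hmeash : AEStronglyMeasurable h (volume.restrict (Ico p τ)) := by
        have : AEMeasurable h (volume.restrict (Ico p τ)) :=
          hmeas.comp_aemeasurable (aemeasurable_id.prodMk hmeasF)
        exact this.aestronglyMeasurable
      have hbound : ∀ᵐ r ∂(volume.restrict (Ico p τ)), ‖h r‖ ≤ C + κ * Bd := by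
        refine (ae_restrict_iff' measurableSet_Ico).mpr
          (Filter.Eventually.of_forall fun r hr => ?_)
        have h1 : ‖F r‖ ≤ Bd := bdF r hr r ⟨hr.1, le_rfl⟩
        have h2 : ‖h r‖ ≤ C + κ * ‖F r‖ :=
          hnorm r ⟨hr.1, hr.2.le.trans hτmem.2⟩ (F r)
        nlinarith [norm_nonneg (F r)]
      have hico : IntegrableOn h (Ico p τ) volume :=
        Integrable.mono' (integrable_const _) hmeash hbound
      exact hico.congr_set_ae (Ioc_ae_eq_Icc.trans Ico_ae_eq_Icc.symm)
  exact hbad (by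
    rw [intervalIntegrable_iff_integrableOn_Ioc_of_le hpq,
      ← Ioc_union_Ioc_eq_Ioc hτmem.1 hτmem.2]
    exact part1.union part2)

lemma cmpFwd {d : ℕ} {p q κ : ℝ} (hpq : p ≤ q) (hκ : 0 ≤ κ)
    {f g hf hg : ℝ → Vec d}
    (hfc : ContinuousOn f (Icc p q)) (hgc : ContinuousOn g (Icc p q))
    (hfi : IntervalIntegrable hf volume p q) (hgi : IntervalIntegrable hg volume p q)
    (heqf : ∀ t ∈ Icc p q, f t = f p + ∫ r in p..t, hf r)
    (heqg : ∀ t ∈ Icc p q, g t = g p + ∫ r in p..t, hg r)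
    (hlip : ∀ r ∈ Icc p q, ‖hf r - hg r‖ ≤ κ * ‖f r - g r‖) :
    ∀ t ∈ Icc p q, ‖f t - g t‖ ≤ ‖f p - g p‖ * Real.exp (κ * (t - p)) := by
  have hdiffc : ContinuousOn (fun t => ‖f t - g t‖) (Icc p q) := (hfc.sub hgc).norm
  refine gron hpq hκ (norm_nonneg _) hdiffc (fun t _ => norm_nonneg _) ?_
  intro t ht
  have hfi' : IntervalIntegrable hf volume p t := hfi.mono_set (by
    rw [uIcc_of_le ht.1, uIcc_of_le hpq]; exact Icc_subset_Icc le_rfl ht.2)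
  have hgi' : IntervalIntegrable hg volume p t := hgi.mono_set (by
    rw [uIcc_of_le ht.1, uIcc_of_le hpq]; exact Icc_subset_Icc le_rfl ht.2)
  have hsubint : IntervalIntegrable (fun r => hf r - hg r) volume p t := hfi'.sub hgi'
  have hnormdiffint : IntervalIntegrable (fun r => κ * ‖f r - g r‖) volume p t := by
    apply ContinuousOn.intervalIntegrable
    rw [uIcc_of_le ht.1]
    exact continuousOn_const.mul ((hdiffc.mono (Icc_subset_Icc le_rfl ht.2)))
  have key : f t - g t = (f p - g p) + ∫ r in p..t, (hf r - hg r) := by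
    rw [heqf t ht, heqg t ht, intervalIntegral.integral_sub hfi' hgi']
    abel
  calc ‖f t - g t‖ ≤ ‖f p - g p‖ + ‖∫ r in p..t, (hf r - hg r)‖ := by
        rw [key]; exact norm_add_le _ _
  _ ≤ ‖f p - g p‖ + ∫ r in p..t, ‖hf r - hg r‖ := by
        have := intervalIntegral.norm_integral_le_integral_norm
          (f := fun r => hf r - hg r) (μ := volume) ht.1
        linarith
  _ ≤ ‖f p - g p‖ + ∫ r in p..t, κ * ‖f r - g r‖ := by
        have := intervalIntegral.integral_mono_on ht.1 hsubint.norm hnormdiffint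
          (fun r hr => hlip r ⟨hr.1, hr.2.trans ht.2⟩)
        linarith
  _ = ‖f p - g p‖ + κ * ∫ r in p..t, ‖f r - g r‖ := by
        rw [intervalIntegral.integral_const_mul]

lemma cmpBwd {d : ℕ} {p q κ : ℝ} (hpq : p ≤ q) (hκ : 0 ≤ κ)
    {f g hf hg : ℝ → Vec d}
    (hfc : ContinuousOn f (Icc p q)) (hgc : ContinuousOn g (Icc p q))
    (hfi : IntervalIntegrable hf volume p q) (hgi : IntervalIntegrable hg volume p q)
    (heqf : ∀ t ∈ Icc p q, f t = f p + ∫ r in p..t, hf r)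
    (heqg : ∀ t ∈ Icc p q, g t = g p + ∫ r in p..t, hg r)
    (hlip : ∀ r ∈ Icc p q, ‖hf r - hg r‖ ≤ κ * ‖f r - g r‖) :
    ∀ t ∈ Icc p q, ‖f t - g t‖ ≤ ‖f q - g q‖ * Real.exp (κ * (q - t)) := by
  have hmaps : ∀ u ∈ Icc p q, p + q - u ∈ Icc p q := fun u hu =>
    ⟨by linarith [hu.2], by linarith [hu.1]⟩
  have hrefl : ∀ (k : ℝ → Vec d), IntervalIntegrable k volume p q →
      IntervalIntegrable (fun u => k (p + q - u)) volume p q := by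
    intro k hk
    have := (hk.comp_sub_left (p + q)).symm
    simpa using this
  -- reflected curve equation
  have heq' : ∀ (F HF : ℝ → Vec d), IntervalIntegrable HF volume p q →
      (∀ t ∈ Icc p q, F t = F p + ∫ r in p..t, HF r) →
      ∀ t ∈ Icc p q, F (p + q - t) = F q + ∫ r in p..t, -HF (p + q - r) := by
    intro F HF hHF hFeq t ht
    have h1 : (∫ r in p..t, HF (p + q - r)) = ∫ r in (p + q - t)..(p + q - p), HF r := by
      rw [intervalIntegral.integral_comp_sub_left HF (p + q)]
    have h2 : p + q - p = q := by ring
    have hintq : IntervalIntegrable HF volume p (p + q - t) := hHF.mono_set (by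
      rw [uIcc_of_le (hmaps t ht).1, uIcc_of_le hpq]
      exact Icc_subset_Icc le_rfl (hmaps t ht).2)
    have hint2 : IntervalIntegrable HF volume (p + q - t) q :=
      (hintq.symm).trans hHF
    have h3 : F q = F p + ∫ r in p..q, HF r := hFeq q ⟨hpq, le_rfl⟩
    have h4 : F (p + q - t) = F p + ∫ r in p..(p + q - t), HF r := hFeq _ (hmaps t ht)
    have h5 : (∫ r in p..(p + q - t), HF r) + (∫ r in (p + q - t)..q, HF r)
        = ∫ r in p..q, HF r := intervalIntegral.integral_add_adjacent_intervals hintq hint2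
    rw [intervalIntegral.integral_neg, h1, h2, h4, h3, ← h5]
    abel
  intro t ht
  have key := cmpFwd (d := d) hpq hκ (f := fun u => f (p + q - u)) (g := fun u => g (p + q - u))
    (hf := fun u => -hf (p + q - u)) (hg := fun u => -hg (p + q - u))
    (hfc.comp (by fun_prop) hmaps) (hgc.comp (by fun_prop) hmaps)
    ((hrefl hf hfi).neg) ((hrefl hg hgi).neg)
    (by
      have h := heq' f hf hfi heqf
      intro u hu
      show f (p + q - u) = f (p + q - p) + ∫ r in p..u, -hf (p + q - r)
      rw [show p + q - p = q by ring]
      exact h u hu)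
    (by
      have h := heq' g hg hgi heqg
      intro u hu
      show g (p + q - u) = g (p + q - p) + ∫ r in p..u, -hg (p + q - r)
      rw [show p + q - p = q by ring]
      exact h u hu)
    (by
      intro r hr
      have h2 := hlip (p + q - r) (hmaps r hr)
      show ‖-hf (p + q - r) - -hg (p + q - r)‖ ≤ _
      rw [show -hf (p + q - r) - -hg (p + q - r) = -(hf (p + q - r) - hg (p + q - r)) by abel,
        norm_neg]
      exact h2)
    (p + q - t) (hmaps t ht)
  simp only [show p + q - (p + q - t) = t by ring, show p + q - p = q by ring] at key
  convert key using 3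
  ring

lemma theta_sol {d : ℕ} {κ : ℝ} (hκ : 0 ≤ κ) {b : ℝ → Vec d → Vec d}
    (hb : LipschitzDrift d b κ) {θ : ℝ → ℝ → Vec d → Vec d} (hθ : IsFlow d b θ)
    {s : ℝ} (hs : s ∈ Icc (0:ℝ) 1) (z : Vec d) :
    IntervalIntegrable (fun r => b r (θ r s z)) volume 0 1 ∧
      ContinuousOn (fun t => θ t s z) (Icc 0 1) := by
  obtain ⟨hmeas, ⟨C, hC⟩, hLip⟩ := hb
  set F : ℝ → Vec d := fun t => θ t s z with hFdef
  set h : ℝ → Vec d := fun r => b r (F r) with hhdef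
  have heq : ∀ t : ℝ, 0 ≤ t → F t = z + ∫ r in s..t, h r := fun t ht => hθ s t hs.1 ht z
  have hFs : F s = z := by rw [heq s hs.1, intervalIntegral.integral_same, add_zero]
  -- forward integrability on [s, 1]
  have int_fwd : IntervalIntegrable h volume s 1 := by
    refine boot hs.2 hκ b hmeas (fun r hr => hC r (hs.1.trans hr.1))
      (fun r hr => hLip r (hs.1.trans hr.1)) F (fun t ht => ?_)
    rw [hFs]
    exact heq t (hs.1.trans ht.1)
  -- backward integrability on [0, s]
  have int_bwd : IntervalIntegrable h volume 0 s := by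
    set G : ℝ → Vec d := fun u => θ (s - u) s z with hGdef
    set B' : ℝ → Vec d → Vec d := fun u w => -b (s - u) w with hB'def
    have hmeas' : Measurable (Function.uncurry B') := by
      have : Measurable fun p : ℝ × Vec d => -(Function.uncurry b) (s - p.1, p.2) :=
        (hmeas.comp ((measurable_const.sub measurable_fst).prodMk measurable_snd)).neg
      exact this
    have key := boot (d := d) hs.1 (C := C) hκ B' hmeas'
      (fun r hr => by
        show ‖-b (s - r) 0‖ ≤ C
        rw [norm_neg]
        exact hC (s - r) (by simp [hr.2]))
      (fun r hr zz w => by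
        show ‖-b (s - r) zz - -b (s - r) w‖ ≤ _
        rw [show -b (s - r) zz - -b (s - r) w = -(b (s - r) zz - b (s - r) w) by abel, norm_neg]
        exact hLip (s - r) (by simp [hr.2]) zz w)
      G
      (fun u hu => by
        show θ (s - u) s z = θ (s - 0) s z + ∫ r in (0:ℝ)..u, -b (s - r) (θ (s - r) s z)
        rw [sub_zero, show θ s s z = z from hFs]
        have h1 : (∫ r in (0:ℝ)..u, -b (s - r) (θ (s - r) s z)) = -∫ r in (0:ℝ)..u, h (s - r) := by
          rw [← intervalIntegral.integral_neg]
        have h2 : (∫ r in (0:ℝ)..u, h (s - r)) = ∫ r in (s - u)..(s - 0), h r :=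
          intervalIntegral.integral_comp_sub_left h s
        rw [h1, h2, sub_zero, ← intervalIntegral.integral_symm]
        exact heq (s - u) (by linarith [hu.2]))
    have key2 : IntervalIntegrable (fun r => h (s - r)) volume 0 s := by
      have e2 : (-fun r : ℝ => B' r (G r)) = fun r => h (s - r) := by
        funext r
        show -(-b (s - r) (θ (s - r) s z)) = _
        rw [neg_neg]
      have := key.neg
      rwa [e2] at this
    have key3 := key2.comp_sub_left s
    simp only [sub_self, sub_zero] at key3
    have e : (fun x : ℝ => h (s - (s - x))) = h := by
      funext u
      simp
    rw [e] at key3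
    exact key3.symm
  have int01 : IntervalIntegrable h volume 0 1 := int_bwd.trans int_fwd
  refine ⟨int01, ?_⟩
  have hs' : s ∈ uIcc (0:ℝ) 1 := by rw [uIcc_of_le zero_le_one]; exact hs
  have hcont := intervalIntegral.continuousOn_primitive_interval' int01 hs'
  rw [uIcc_of_le zero_le_one] at hcont
  exact (continuousOn_const.add hcont).congr (fun t ht => heq t ht.1)

lemma theta_comp {d : ℕ} {κ : ℝ} (hκ : 0 ≤ κ) {b : ℝ → Vec d → Vec d}
    (hb : LipschitzDrift d b κ) {θ : ℝ → ℝ → Vec d → Vec d} (hθ : IsFlow d b θ)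
    {s s' : ℝ} (hs : s ∈ Icc (0:ℝ) 1) (hs' : s' ∈ Icc (0:ℝ) 1) (z z' : Vec d)
    {t₀ t : ℝ} (ht₀ : t₀ ∈ Icc (0:ℝ) 1) (ht : t ∈ Icc (0:ℝ) 1) :
    ‖θ t s z - θ t s' z'‖ ≤ ‖θ t₀ s z - θ t₀ s' z'‖ * Real.exp (κ * |t - t₀|) := by
  obtain ⟨intf, contf⟩ := theta_sol hκ hb hθ hs z
  obtain ⟨intg, contg⟩ := theta_sol hκ hb hθ hs' z'
  set f : ℝ → Vec d := fun t => θ t s z with hfdef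
  set g : ℝ → Vec d := fun t => θ t s' z' with hgdef
  set hf : ℝ → Vec d := fun r => b r (f r) with hhfdef
  set hg : ℝ → Vec d := fun r => b r (g r) with hhgdef
  have sub : ∀ {a₁ a₂ : ℝ}, a₁ ∈ Icc (0:ℝ) 1 → a₂ ∈ Icc (0:ℝ) 1 → ∀ k : ℝ → Vec d,
      IntervalIntegrable k volume 0 1 → IntervalIntegrable k volume a₁ a₂ := by
    intro a₁ a₂ h₁ h₂ k hk
    refine hk.mono_set ?_
    rw [uIcc_of_le zero_le_one]
    exact uIcc_subset_Icc h₁ h₂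
  have anch : ∀ (F K : ℝ → Vec d), IntervalIntegrable K volume 0 1 →
      (∀ u : ℝ, 0 ≤ u → F u = F 0 + ∫ r in (0:ℝ)..u, K r → True) → True := fun _ _ _ _ => trivial
  -- anchored equation
  have heqf : ∀ u : ℝ, 0 ≤ u → f u = z + ∫ r in s..u, hf r := fun u hu => hθ s u hs.1 hu z
  have heqg : ∀ u : ℝ, 0 ≤ u → g u = z' + ∫ r in s'..u, hg r := fun u hu => hθ s' u hs'.1 hu z'
  have anchf : ∀ p ∈ Icc (0:ℝ) 1, ∀ u ∈ Icc (0:ℝ) 1, f u = f p + ∫ r in p..u, hf r := by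
    intro p hp u hu
    have h1 := heqf u hu.1
    have h2 := heqf p hp.1
    have h3 : (∫ r in s..u, hf r) - (∫ r in s..p, hf r) = ∫ r in p..u, hf r :=
      intervalIntegral.integral_interval_sub_left (sub hs hu hf intf) (sub hs hp hf intf)
    rw [h1, h2, ← h3]
    abel
  have anchg : ∀ p ∈ Icc (0:ℝ) 1, ∀ u ∈ Icc (0:ℝ) 1, g u = g p + ∫ r in p..u, hg r := by
    intro p hp u hu
    have h3 : (∫ r in s'..u, hg r) - (∫ r in s'..p, hg r) = ∫ r in p..u, hg r :=
      intervalIntegral.integral_interval_sub_left (sub hs' hu hg intg) (sub hs' hp hg intg)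
    rw [heqg u hu.1, heqg p hp.1, ← h3]
    abel
  obtain ⟨hmeas, ⟨C, hC⟩, hLip⟩ := hb
  rcases le_total t₀ t with hle | hle
  · have key := cmpFwd (d := d) (p := t₀) (q := t) hle hκ
      (contf.mono (Icc_subset_Icc ht₀.1 ht.2)) (contg.mono (Icc_subset_Icc ht₀.1 ht.2))
      (sub ht₀ ht hf intf) (sub ht₀ ht hg intg)
      (fun u hu => anchf t₀ ht₀ u ⟨ht₀.1.trans hu.1, hu.2.trans ht.2⟩)
      (fun u hu => anchg t₀ ht₀ u ⟨ht₀.1.trans hu.1, hu.2.trans ht.2⟩)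
      (fun r hr => hLip r (ht₀.1.trans hr.1) (f r) (g r))
      t ⟨hle, le_rfl⟩
    rwa [abs_of_nonneg (by linarith)]
  · have key := cmpBwd (d := d) (p := t) (q := t₀) hle hκ
      (contf.mono (Icc_subset_Icc ht.1 ht₀.2)) (contg.mono (Icc_subset_Icc ht.1 ht₀.2))
      (sub ht ht₀ hf intf) (sub ht ht₀ hg intg)
      (fun u hu => anchf t ht u ⟨ht.1.trans hu.1, hu.2.trans ht₀.2⟩)
      (fun u hu => anchg t ht u ⟨ht.1.trans hu.1, hu.2.trans ht₀.2⟩)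
      (fun r hr => hLip r (ht.1.trans hr.1) (f r) (g r))
      t ⟨le_rfl, hle⟩
    rwa [abs_of_nonpos (by linarith), neg_sub]

/-- **Chaining claim for the lower bound.** For a Lipschitz drift with flow
`θ`, if `|θ_{1,0}(x)−y| > 1` and `M` is the smallest integer with
`4 e^{2κ} |θ_{1,0}(x)−y|² < M`, then setting `t_j := j/M` there exist points
`ξ₀ = x, ξ₁, …, ξ_M = y` with `|ξ_{j+1} − θ_{t_{j+1},t_j}(ξ_j)| ≤ 1/(2√M)` for all `j < M`. -/
theorem chaining_points_exist
    (d : ℕ) (κ : ℝ) (hκ : 0 < κ)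
    (b : ℝ → Vec d → Vec d) (hb : LipschitzDrift d b κ)
    (θ : ℝ → ℝ → Vec d → Vec d) (hθ : IsFlow d b θ)
    (x y : Vec d) (hxy : 1 < ‖θ 1 0 x - y‖)
    (M : ℕ)
    (hM : 4 * Real.exp (2 * κ) * ‖θ 1 0 x - y‖ ^ 2 < M)
    (hM' : (M : ℝ) - 1 ≤ 4 * Real.exp (2 * κ) * ‖θ 1 0 x - y‖ ^ 2) :
    ∃ ξ : ℕ → Vec d, ξ 0 = x ∧ ξ M = y ∧
      ∀ j < M,
        ‖ξ (j + 1) - θ (((j : ℝ) + 1) / M) ((j : ℝ) / M) (ξ j)‖ ≤ 1 / (2 * Real.sqrt M) := by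
  have hE1 : (1:ℝ) < Real.exp (2 * κ) := by
    have h2 := Real.add_one_le_exp (2 * κ)
    linarith
  have hMgt4 : (4:ℝ) < M := by nlinarith [norm_nonneg (θ 1 0 x - y)]
  have hMpos : (0:ℝ) < M := by linarith
  have h01 : (0:ℝ) ∈ Icc (0:ℝ) 1 := by norm_num
  have h11 : (1:ℝ) ∈ Icc (0:ℝ) 1 := by norm_num
  have hmemj : ∀ j : ℕ, j ≤ M → (j:ℝ)/M ∈ Icc (0:ℝ) 1 := by
    intro j hj
    constructor
    · positivity
    · rw [div_le_one hMpos]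
      exact_mod_cast hj
  have hself : ∀ a : ℝ, 0 ≤ a → ∀ w : Vec d, θ a a w = w := by
    intro a ha w
    rw [hθ a a ha ha w, intervalIntegral.integral_same, add_zero]
  have hκ' : (0:ℝ) ≤ κ := hκ.le
  set γ : ℕ → Vec d := fun j => θ 1 0 x + ((j:ℝ)/M) • (y - θ 1 0 x) with hγdef
  refine ⟨fun j => θ ((j:ℝ)/M) 1 (γ j), ?_, ?_, ?_⟩
  · -- ξ 0 = x
    have hγ0 : γ 0 = θ 1 0 x := by simp [hγdef]
    show θ (((0:ℕ):ℝ)/M) 1 (γ 0) = x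
    rw [hγ0]
    have key := theta_comp hκ' hb hθ h11 h01 (θ 1 0 x) x h11 h01
    rw [hself 1 zero_le_one (θ 1 0 x), sub_self, norm_zero, zero_mul,
      hself 0 le_rfl x] at key
    rw [Nat.cast_zero, zero_div, ← sub_eq_zero]
    exact norm_le_zero_iff.mp key
  · -- ξ M = y
    have hdiv : ((M:ℕ):ℝ)/M = 1 := div_self hMpos.ne'
    have hγM : γ M = y := by
      rw [hγdef]
      simp only [hdiv, one_smul]
      abel
    show θ (((M:ℕ):ℝ)/M) 1 (γ M) = y
    rw [hdiv, hγM, hself 1 zero_le_one y]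
  · -- the chaining estimate
    intro j hj
    have htj : (j:ℝ)/M ∈ Icc (0:ℝ) 1 := hmemj j hj.le
    have ht'nat : ((j+1:ℕ):ℝ)/M ∈ Icc (0:ℝ) 1 := hmemj (j+1) hj
    have hcast : ((j+1:ℕ):ℝ) = (j:ℝ) + 1 := by push_cast; ring
    have ht' : ((j:ℝ)+1)/M ∈ Icc (0:ℝ) 1 := by rwa [hcast] at ht'nat
    show ‖θ (((j+1:ℕ):ℝ)/M) 1 (γ (j+1)) -
        θ (((j:ℝ)+1)/M) ((j:ℝ)/M) (θ ((j:ℝ)/M) 1 (γ j))‖ ≤ 1 / (2 * Real.sqrt M)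
    rw [hcast]
    -- semigroup step
    have semi : θ (((j:ℝ)+1)/M) ((j:ℝ)/M) (θ ((j:ℝ)/M) 1 (γ j)) = θ (((j:ℝ)+1)/M) 1 (γ j) := by
      have key := theta_comp hκ' hb hθ htj h11 (θ ((j:ℝ)/M) 1 (γ j)) (γ j) htj ht'
      rw [hself ((j:ℝ)/M) htj.1 (θ ((j:ℝ)/M) 1 (γ j)), sub_self, norm_zero, zero_mul] at key
      rw [← sub_eq_zero]
      exact norm_le_zero_iff.mp key
    rw [semi]
    -- Lipschitz step
    have key2 := theta_comp hκ' hb hθ h11 h11 (γ (j+1)) (γ j) h11 ht'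
    rw [hself 1 zero_le_one (γ (j+1)), hself 1 zero_le_one (γ j)] at key2
    have hdiffγ : γ (j+1) - γ j = ((1:ℝ)/M) • (y - θ 1 0 x) := by
      rw [hγdef]
      simp only
      rw [add_sub_add_left_eq_sub, ← sub_smul]
      congr 1
      rw [hcast]
      ring
    have hnormγ : ‖γ (j+1) - γ j‖ = ‖θ 1 0 x - y‖ / M := by
      rw [hdiffγ, norm_smul, norm_sub_rev]
      rw [Real.norm_eq_abs, abs_of_pos (by positivity)]
      ring
    have hexp : Real.exp (κ * |((j:ℝ)+1)/M - 1|) ≤ Real.exp κ := by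
      apply Real.exp_le_exp.mpr
      have habs : |((j:ℝ)+1)/M - 1| ≤ 1 := by
        rw [abs_le]
        constructor <;> linarith [ht'.1, ht'.2]
      calc κ * |((j:ℝ)+1)/M - 1| ≤ κ * 1 := mul_le_mul_of_nonneg_left habs hκ'
      _ = κ := mul_one κ
    have hnum : ‖θ 1 0 x - y‖ / M * Real.exp κ ≤ 1 / (2 * Real.sqrt M) := by
      set s := Real.sqrt M with hsdef
      have hs2 : s^2 = M := Real.sq_sqrt hMpos.le
      have hspos : 0 < s := Real.sqrt_pos.mpr hMpos
      set E := Real.exp κ with hEdef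
      have hEpos : 0 < E := Real.exp_pos κ
      have hexp2 : Real.exp (2*κ) = E^2 := by
        rw [two_mul, Real.exp_add, hEdef, sq]
      rw [hexp2] at hM
      rw [div_mul_eq_mul_div, div_le_div_iff₀ hMpos (by positivity)]
      nlinarith [sq_nonneg (2 * E * ‖θ 1 0 x - y‖ - s), norm_nonneg (θ 1 0 x - y)]
    calc ‖θ (((j:ℝ)+1)/M) 1 (γ (j+1)) - θ (((j:ℝ)+1)/M) 1 (γ j)‖
        ≤ ‖γ (j+1) - γ j‖ * Real.exp (κ * |((j:ℝ)+1)/M - 1|) := key2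
    _ ≤ ‖θ 1 0 x - y‖ / M * Real.exp κ := by
        rw [hnormγ]
        exact mul_le_mul_of_nonneg_left hexp (by positivity)
    _ ≤ 1 / (2 * Real.sqrt M) := hnum
end
end

section
/- (Ball inclusion under the flow.) Let b be measurable, bounded at the origin uniformly in time, and Lipschitz in space with constant κ uniformly in time, and let θ denote its flow. Then for all 0 ≤ s ≤ t, every x ∈ ℝ^d and every r > 0, the image under the flow map of the closed ball of radius r centered at x contains the closed ball of radius e^{−κ(t−s)}·r centered at θ_{t,s}(x); that is, B̄(θ_{t,s}(x), e^{−κ(t−s)}·r) ⊆ θ_{t,s}(B̄(x,r)). -/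
noncomputable section

open MeasureTheory Matrix Set

lemma gronwall_int {f : ℝ → ℝ} {c u A K E : ℝ} (hcu : c ≤ u)
    (hf : ContinuousOn f (Icc c u)) (hf0 : ∀ v ∈ Icc c u, 0 ≤ f v)
    (hA : 0 ≤ A) (hK : 0 ≤ K) (hE : 0 ≤ E)
    (hineq : ∀ v ∈ Icc c u, f v ≤ A + ∫ r in c..v, (K * f r + E)) :
    ∀ v ∈ Icc c u, f v ≤ gronwallBound A K E (v - c) := by
  -- clamp
  set p : ℝ → ℝ := fun v => max c (min v u) with hp
  have hpmem : ∀ v, p v ∈ Icc c u := fun v => ⟨le_max_left _ _, max_le hcu (min_le_right _ _)⟩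
  have hpid : ∀ v ∈ Icc c u, p v = v := fun v hv => by
    simp [hp, min_eq_left hv.2, max_eq_right hv.1]
  have hpc : Continuous p := continuous_const.max (continuous_id.min continuous_const)
  set ft : ℝ → ℝ := fun v => f (p v) with hft
  have hftc : Continuous ft := hf.comp_continuous hpc hpmem
  have hft0 : ∀ v, 0 ≤ ft v := fun v => hf0 _ (hpmem v)
  set G : ℝ → ℝ := fun r => K * ft r + E with hG
  have hGc : Continuous G := (continuous_const.mul hftc).add continuous_const
  set g : ℝ → ℝ := fun v => A + ∫ r in c..v, G r with hg
  have hgeq : ∀ v ∈ Icc c u, g v = A + ∫ r in c..v, (K * f r + E) := by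
    intro v hv
    have : EqOn (fun r => K * f r + E) G (uIcc c v) := by
      intro r hr
      have hr' : r ∈ Icc c u := by
        rw [uIcc_of_le hv.1] at hr
        exact ⟨hr.1, hr.2.trans hv.2⟩
      simp [hG, hft, hpid r hr']
    simp only [hg]
    rw [intervalIntegral.integral_congr this]
  have hfg : ∀ v ∈ Icc c u, f v ≤ g v := fun v hv => (hineq v hv).trans (hgeq v hv).ge
  have hg0 : ∀ v ∈ Icc c u, 0 ≤ g v := fun v hv => (hf0 v hv).trans (hfg v hv)
  have hderiv : ∀ v, HasDerivAt g (G v) v := by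
    intro v
    exact (intervalIntegral.integral_hasDerivAt_right (hGc.intervalIntegrable _ _)
      hGc.stronglyMeasurable.stronglyMeasurableAtFilter hGc.continuousAt).const_add A
  have key := norm_le_gronwallBound_of_norm_deriv_right_le (f := g) (f' := G) (a := c) (b := u) (δ := A) (K := K) (ε := E)
    (fun v _ => (hderiv v).continuousAt.continuousWithinAt)
    (fun x _ => (hderiv x).hasDerivWithinAt) (by simp [hg, abs_of_nonneg hA]) ?_
  · intro v hv
    refine (hfg v hv).trans ?_
    calc g v ≤ ‖g v‖ := le_abs_self _
      _ ≤ _ := key v hv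
  · intro x hx
    have hx' : x ∈ Icc c u := ⟨hx.1, hx.2.le⟩
    have h1 : G x = K * f x + E := by simp [hG, hft, hpid x hx']
    have h2 : ‖G x‖ = G x := abs_of_nonneg (by have := hft0 x; simp only [hG]; nlinarith)
    rw [h2, h1]
    have : f x ≤ ‖g x‖ := (hfg x hx').trans (le_abs_self _)
    nlinarith

lemma gronwallBound_mono' {δ K E x X : ℝ} (hδ : 0 ≤ δ) (hK : 0 < K) (hE : 0 ≤ E)
    (hx : x ≤ X) : gronwallBound δ K E x ≤ gronwallBound δ K E X := by
  rw [gronwallBound_of_K_ne_0 hK.ne']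
  simp only
  have h1 : Real.exp (K * x) ≤ Real.exp (K * X) :=
    Real.exp_le_exp.2 (mul_le_mul_of_nonneg_left hx hK.le)
  have h2 : 0 ≤ E / K := div_nonneg hE hK.le
  nlinarith [Real.exp_pos (K * x)]

lemma gronwall_int_back {f : ℝ → ℝ} {c u A K E : ℝ} (hcu : c ≤ u)
    (hf : ContinuousOn f (Icc c u)) (hf0 : ∀ v ∈ Icc c u, 0 ≤ f v)
    (hA : 0 ≤ A) (hK : 0 ≤ K) (hE : 0 ≤ E)
    (hineq : ∀ v ∈ Icc c u, f v ≤ A + ∫ r in v..u, (K * f r + E)) :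
    ∀ v ∈ Icc c u, f v ≤ gronwallBound A K E (u - v) := by
  set R : ℝ → ℝ := fun w => c + u - w with hR
  have hRmem : ∀ w ∈ Icc c u, R w ∈ Icc c u := fun w hw =>
    ⟨by simp [hR]; linarith [hw.2], by simp [hR]; linarith [hw.1]⟩
  have hRc : Continuous R := continuous_const.sub continuous_id
  set f' : ℝ → ℝ := fun w => f (R w) with hf'
  have hf'c : ContinuousOn f' (Icc c u) :=
    hf.comp hRc.continuousOn (fun w hw => hRmem w hw)
  have key := gronwall_int (f := f') hcu hf'c (fun v hv => hf0 _ (hRmem v hv)) hA hK hE ?_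
  · intro v hv
    have hv' := hRmem v hv
    have h2 := key (R v) hv'
    have hRR : f' (R v) = f v := by simp [hf', hR]
    have hRc2 : R v - c = u - v := by simp [hR]; ring
    rwa [hRR, hRc2] at h2
  · intro v hv
    have h1 : (∫ w in c..v, (K * f' w + E)) = ∫ r in (R v)..u, (K * f r + E) := by
      have := intervalIntegral.integral_comp_sub_left (a := c) (b := v)
        (fun r => K * f r + E) (c + u)
      simp only [hR, hf']
      convert this using 2 <;> ring_nf
    rw [h1]
    exact hineq (R v) (hRmem v hv)

lemma flow_core_fwd {d : ℕ} {β : ℝ → Vec d → Vec d} {κ M c C : ℝ}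
    (hmeas : Measurable (Function.uncurry β))
    (hκ : 0 < κ) (hM : 0 ≤ M)
    (hLip : ∀ u ∈ Icc c C, ∀ z w : Vec d, ‖β u z - β u w‖ ≤ κ * ‖z - w‖)
    (hBd : ∀ u ∈ Icc c C, ‖β u 0‖ ≤ M)
    {φ : ℝ → Vec d} (hcC : c ≤ C)
    (hφ : ∀ u ∈ Icc c C, φ u = φ c + ∫ r in c..u, β r (φ r)) :
    IntervalIntegrable (fun r => β r (φ r)) volume c C ∧ ContinuousOn φ (Icc c C) := by
  set h : ℝ → Vec d := fun r => β r (φ r) with hh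
  have hgrow : ∀ r ∈ Icc c C, ‖h r‖ ≤ M + κ * ‖φ r‖ := by
    intro r hr
    have h1 : ‖β r (φ r) - β r 0‖ ≤ κ * ‖φ r‖ := by
      simpa using hLip r hr (φ r) 0
    calc ‖h r‖ = ‖β r 0 + (β r (φ r) - β r 0)‖ := by rw [hh]; congr 1; abel
      _ ≤ ‖β r 0‖ + ‖β r (φ r) - β r 0‖ := norm_add_le _ _
      _ ≤ M + κ * ‖φ r‖ := add_le_add (hBd r hr) h1
  -- Step 1: continuity on [c,u] given integrability up to u
  have step1 : ∀ u ∈ Icc c C, IntervalIntegrable h volume c u → ContinuousOn φ (Icc c u) := by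
    intro u hu hint
    have hco : ContinuousOn (fun v => φ c + ∫ r in c..v, h r) (Icc c u) := by
      have := intervalIntegral.continuousOn_primitive_interval' hint
        (a := c) (by simp [left_mem_uIcc])
      rw [uIcc_of_le hu.1] at this
      exact continuousOn_const.add this
    exact hco.congr (fun v hv => hφ v ⟨hv.1, hv.2.trans hu.2⟩)
  -- Step 2: Gronwall bound on [c,u] given integrability
  set K0 : ℝ := gronwallBound ‖φ c‖ κ M (C - c) with hK0
  have step2 : ∀ u ∈ Icc c C, IntervalIntegrable h volume c u →
      ∀ v ∈ Icc c u, ‖φ v‖ ≤ K0 := by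
    intro u hu hint
    have hcont : ContinuousOn (fun v => ‖φ v‖) (Icc c u) := (step1 u hu hint).norm
    have hineq : ∀ v ∈ Icc c u, ‖φ v‖ ≤ ‖φ c‖ + ∫ r in c..v, (κ * ‖φ r‖ + M) := by
      intro v hv
      have hv' : v ∈ Icc c C := ⟨hv.1, hv.2.trans hu.2⟩
      have hintv : IntervalIntegrable h volume c v :=
        hint.mono_set (by rw [uIcc_of_le hv.1, uIcc_of_le hu.1]; exact Icc_subset_Icc le_rfl hv.2)
      calc ‖φ v‖ = ‖φ c + ∫ r in c..v, h r‖ := by rw [← hφ v hv']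
        _ ≤ ‖φ c‖ + ‖∫ r in c..v, h r‖ := norm_add_le _ _
        _ ≤ ‖φ c‖ + ∫ r in c..v, ‖h r‖ :=
            add_le_add le_rfl (intervalIntegral.norm_integral_le_integral_norm hv.1)
        _ ≤ ‖φ c‖ + ∫ r in c..v, (κ * ‖φ r‖ + M) := by
            refine add_le_add le_rfl ?_
            refine intervalIntegral.integral_mono_on hv.1 hintv.norm ?_ ?_
            · refine ContinuousOn.intervalIntegrable ?_
              rw [uIcc_of_le hv.1]
              exact ((continuousOn_const.mul ((hcont.mono
                (Icc_subset_Icc le_rfl hv.2)))).add continuousOn_const)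
            · intro r hr
              have := hgrow r ⟨hr.1, hr.2.trans hv'.2⟩
              linarith
    have := gronwall_int hu.1 hcont (fun v _ => norm_nonneg _)
      (norm_nonneg _) hκ.le hM hineq
    intro v hv
    exact (this v hv).trans (gronwallBound_mono' (norm_nonneg _) hκ hM (by
      have : v ≤ C := hv.2.trans hu.2
      linarith))
  -- Step 3: global bound
  set K1 : ℝ := max K0 ‖φ c‖ with hK1
  have step3 : ∀ u ∈ Icc c C, ‖φ u‖ ≤ K1 := by
    intro u hu
    by_cases hP : IntervalIntegrable h volume c u
    · exact (step2 u hu hP u ⟨hu.1, le_rfl⟩).trans (le_max_left _ _)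
    · have : φ u = φ c := by
        rw [hφ u hu, intervalIntegral.integral_undef hP, add_zero]
      rw [this]; exact le_max_right _ _
  have hK1nn : 0 ≤ K1 := le_trans (norm_nonneg (φ c)) (le_max_right _ _)
  -- the set of good endpoints
  set T : Set ℝ := {u | u ∈ Icc c C ∧ IntervalIntegrable h volume c u} with hT
  have hcT : c ∈ T := ⟨⟨le_rfl, hcC⟩, IntervalIntegrable.refl⟩
  have hTne : T.Nonempty := ⟨c, hcT⟩
  have hTbdd : BddAbove T := ⟨C, fun u hu => hu.1.2⟩
  set e : ℝ := sSup T with he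
  have hce : c ≤ e := le_csSup hTbdd hcT
  have heC : e ≤ C := csSup_le hTne (fun u hu => hu.1.2)
  -- downward closure
  have hdown : ∀ u ∈ T, ∀ v ∈ Icc c u, v ∈ T := by
    intro u hu v hv
    exact ⟨⟨hv.1, hv.2.trans hu.1.2⟩, hu.2.mono_set
      (by rw [uIcc_of_le hv.1, uIcc_of_le (hv.1.trans ?_)]
          exact Icc_subset_Icc le_rfl hv.2
          exact hv.2)⟩
  -- continuity on Ico c e
  have hcont_ico : ContinuousOn φ (Ico c e) := by
    intro u hu
    obtain ⟨u', hu'T, huu'⟩ := (lt_csSup_iff hTbdd hTne).1 hu.2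
    have hcont' : ContinuousOn φ (Icc c u') := step1 u' hu'T.1 hu'T.2
    have h1 : ContinuousWithinAt φ (Icc c u') u := hcont' u ⟨hu.1, huu'.le⟩
    refine h1.mono_of_mem_nhdsWithin ?_
    rw [mem_nhdsWithin]
    exact ⟨Iio u', isOpen_Iio, huu', fun r hr => ⟨hr.2.1, hr.1.le⟩⟩
  -- points beyond e are "reset"
  have hbeyond : ∀ u ∈ Icc c C, e < u → φ u = φ c := by
    intro u hu heu
    have hnT : u ∉ T := fun hT' => absurd (le_csSup hTbdd hT') (not_le.2 heu)
    have hni : ¬ IntervalIntegrable h volume c u := fun hi => hnT ⟨hu, hi⟩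
    rw [hφ u hu, intervalIntegral.integral_undef hni, add_zero]
  -- a.e. strong measurability of φ on Icc c C
  set ψ : ℝ → Vec d := fun u => if u < e then φ u else φ c with hψ
  have haeeq : φ =ᵐ[volume.restrict (Icc c C)] ψ := by
    have h0 : (volume : Measure ℝ) {e} = 0 := measure_singleton e
    refine (ae_restrict_iff' measurableSet_Icc).2 ?_
    rw [ae_iff]
    refine measure_mono_null ?_ h0
    intro u hu
    simp only [mem_setOf_eq, not_forall] at hu
    obtain ⟨huIcc, hne⟩ := hu
    simp only [mem_singleton_iff]
    by_contra hue
    rcases lt_or_gt_of_ne hue with h1 | h1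
    · exact hne (by simp [hψ, h1])
    · exact hne (by simp [hψ, not_lt.2 h1.le, hbeyond u huIcc h1])
  have hψmeas : AEStronglyMeasurable ψ (volume.restrict (Icc c C)) := by
    have hunion : Icc c C = (Icc c C ∩ Iio e) ∪ (Icc c C ∩ Ici e) := by
      rw [← inter_union_distrib_left, Iio_union_Ici, inter_univ]
    rw [hunion, aestronglyMeasurable_union_iff]
    constructor
    · have hsub : Icc c C ∩ Iio e ⊆ Ico c e := fun r hr => ⟨hr.1.1, hr.2⟩
      have : ContinuousOn ψ (Icc c C ∩ Iio e) := by
        refine ((hcont_ico.mono hsub)).congr ?_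
        intro r hr
        exact if_pos hr.2
      exact this.aestronglyMeasurable (measurableSet_Icc.inter measurableSet_Iio)
    · have : ContinuousOn ψ (Icc c C ∩ Ici e) := by
        refine (continuousOn_const (c := φ c)).congr ?_
        intro r hr
        exact if_neg (not_lt.2 hr.2)
      exact this.aestronglyMeasurable (measurableSet_Icc.inter measurableSet_Ici)
  have hφmeas : AEStronglyMeasurable φ (volume.restrict (Icc c C)) :=
    hψmeas.congr haeeq.symm
  -- h is a.e. strongly measurable on Icc c C
  have hhmeas : AEStronglyMeasurable h (volume.restrict (Icc c C)) := by
    have hmk := hφmeas.stronglyMeasurable_mk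
    have h1 : Measurable (fun r => β r (hφmeas.mk φ r)) :=
      hmeas.comp (measurable_id.prodMk hmk.measurable)
    refine (h1.aestronglyMeasurable).congr ?_
    filter_upwards [hφmeas.ae_eq_mk] with r hr
    simp only [hh, hr]
  -- integrability
  have hint : IntegrableOn h (Icc c C) volume := by
    refine Integrable.mono' (g := fun _ => M + κ * K1)
      (integrableOn_const measure_Icc_lt_top.ne) hhmeas ?_
    refine (ae_restrict_iff' measurableSet_Icc).2 (ae_of_all _ ?_)
    intro r hr
    have h3 := hgrow r hr
    have h2 := step3 r hr
    show ‖h r‖ ≤ M + κ * K1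
    nlinarith
  have hintCC : IntervalIntegrable h volume c C :=
    (intervalIntegrable_iff_integrableOn_Icc_of_le hcC).2 hint
  exact ⟨hintCC, step1 C ⟨hcC, le_rfl⟩ hintCC⟩

lemma flow_core_bwd {d : ℕ} {β : ℝ → Vec d → Vec d} {κ M c C : ℝ}
    (hmeas : Measurable (Function.uncurry β))
    (hκ : 0 < κ) (hM : 0 ≤ M)
    (hLip : ∀ u ∈ Icc c C, ∀ z w : Vec d, ‖β u z - β u w‖ ≤ κ * ‖z - w‖)
    (hBd : ∀ u ∈ Icc c C, ‖β u 0‖ ≤ M)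
    {φ : ℝ → Vec d} (hcC : c ≤ C)
    (hφ : ∀ u ∈ Icc c C, φ u = φ C + ∫ r in C..u, β r (φ r)) :
    IntervalIntegrable (fun r => β r (φ r)) volume c C ∧ ContinuousOn φ (Icc c C) := by
  set k : ℝ := c + C with hk
  set β' : ℝ → Vec d → Vec d := fun w z => -β (k - w) z with hβ'
  set φ' : ℝ → Vec d := fun w => φ (k - w) with hφ'
  have hRmem : ∀ w ∈ Icc c C, k - w ∈ Icc c C := fun w hw =>
    ⟨by simp [hk]; linarith [hw.2], by simp [hk]; linarith [hw.1]⟩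
  have hmeas' : Measurable (Function.uncurry β') := by
    have : Function.uncurry β' = fun p : ℝ × Vec d => -Function.uncurry β (k - p.1, p.2) := rfl
    rw [this]
    exact (hmeas.comp ((measurable_const.sub measurable_fst).prodMk measurable_snd)).neg
  have hLip' : ∀ u ∈ Icc c C, ∀ z w : Vec d, ‖β' u z - β' u w‖ ≤ κ * ‖z - w‖ := by
    intro u hu z w
    have := hLip (k - u) (hRmem u hu) z w
    rw [show β' u z - β' u w = -(β (k - u) z - β (k - u) w) by simp [hβ']; abel, norm_neg]
    exact this
  have hBd' : ∀ u ∈ Icc c C, ‖β' u 0‖ ≤ M := by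
    intro u hu
    simpa [hβ'] using hBd (k - u) (hRmem u hu)
  have hkc : k - c = C := by simp [hk]
  have hφ'eq : ∀ u ∈ Icc c C, φ' u = φ' c + ∫ r in c..u, β' r (φ' r) := by
    intro u hu
    have h1 : (∫ w in c..u, β' w (φ' w)) = -∫ w in c..u, β (k - w) (φ (k - w)) := by
      rw [← intervalIntegral.integral_neg]
    have h2 : (∫ w in c..u, β (k - w) (φ (k - w))) = ∫ x in (k - u)..C, β x (φ x) := by
      have := intervalIntegral.integral_comp_sub_left (a := c) (b := u)
        (fun r => β r (φ r)) k
      rw [this, hkc]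
    have h3 : φ' c = φ C := by show φ (k - c) = φ C; rw [hkc]
    rw [h1, h2, h3, ← intervalIntegral.integral_symm]
    exact hφ (k - u) (hRmem u hu)
  obtain ⟨hint', hcont'⟩ := flow_core_fwd hmeas' hκ hM hLip' hBd' hcC hφ'eq
  constructor
  · have h4 : (fun w => -(β' w (φ' w))) = fun w => β (k - w) (φ (k - w)) := by
      funext w; simp [hβ', hφ']
    have h5 : IntervalIntegrable (fun w => β (k - w) (φ (k - w))) volume c C := by
      rw [← h4]; exact hint'.neg
    have h6 := h5.comp_sub_left k
    have h7 : (fun x => β (k - (k - x)) (φ (k - (k - x)))) = fun x => β x (φ x) := by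
      funext x; simp
    rw [h7, hkc] at h6
    have hkC : k - C = c := by simp [hk]
    rw [hkC] at h6
    exact h6.symm
  · have h8 : ContinuousOn (fun u => φ' (k - u)) (Icc c C) :=
      hcont'.comp (continuous_const.sub continuous_id).continuousOn
        (fun u hu => hRmem u hu)
    refine h8.congr ?_
    intro u _
    simp [hφ']

/-- **Ball inclusion under the flow.** For a Lipschitz drift with flow `θ`,
for all `0 ≤ s ≤ t`, `x` and `r > 0`,
`B̄(θ_{t,s}(x), e^{−κ(t−s)} r) ⊆ θ_{t,s}(B̄(x,r))`. -/
theorem flow_ball_inclusion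
    (d : ℕ) (κ : ℝ) (hκ : 0 < κ)
    (b : ℝ → Vec d → Vec d) (hb : LipschitzDrift d b κ)
    (θ : ℝ → ℝ → Vec d → Vec d) (hθ : IsFlow d b θ) :
    ∀ s t : ℝ, 0 ≤ s → s ≤ t → ∀ x : Vec d, ∀ r : ℝ, 0 < r →
      Metric.closedBall (θ t s x) (Real.exp (-κ * (t - s)) * r) ⊆
        θ t s '' Metric.closedBall x r := by
  intro s t hs hst x r hr y hy
  have ht : 0 ≤ t := hs.trans hst
  obtain ⟨hbmeas, ⟨M₀, hM₀⟩, hLip₀⟩ := hb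
  set M : ℝ := max M₀ 0 with hM
  have hMnn : 0 ≤ M := le_max_right _ _
  have hMb : ∀ u ∈ Icc s t, ‖b u 0‖ ≤ M :=
    fun u hu => (hM₀ u (hs.trans hu.1)).trans (le_max_left _ _)
  have hLip : ∀ u ∈ Icc s t, ∀ z w : Vec d, ‖b u z - b u w‖ ≤ κ * ‖z - w‖ :=
    fun u hu => hLip₀ u (hs.trans hu.1)
  have hmemt : ∀ u ∈ Icc s t, (0:ℝ) ≤ u := fun u hu => hs.trans hu.1
  -- the forward trajectory from x
  set φ : ℝ → Vec d := fun u => θ u s x with hφdef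
  have hφs : φ s = x := by
    have := hθ s s hs hs x
    simpa [hφdef, intervalIntegral.integral_same] using this
  have hφeq : ∀ u ∈ Icc s t, φ u = φ s + ∫ r' in s..u, b r' (φ r') := by
    intro u hu
    rw [hφs]
    exact hθ s u hs (hmemt u hu) x
  obtain ⟨hφint, hφcont⟩ := flow_core_fwd hbmeas hκ hMnn hLip hMb hst hφeq
  -- the backward trajectory from y
  set ψ : ℝ → Vec d := fun u => θ u t y with hψdef
  have hψt : ψ t = y := by
    have := hθ t t ht ht y
    simpa [hψdef, intervalIntegral.integral_same] using this
  have hψeq : ∀ u ∈ Icc s t, ψ u = ψ t + ∫ r' in t..u, b r' (ψ r') := by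
    intro u hu
    rw [hψt]
    exact hθ t u ht (hmemt u hu) y
  obtain ⟨hψint, hψcont⟩ := flow_core_bwd hbmeas hκ hMnn hLip hMb hst hψeq
  set z : Vec d := ψ s with hzdef
  -- splitting identities
  have hsubφ : ∀ u ∈ Icc s t, uIcc s u ⊆ uIcc s t := fun u hu => by
    rw [uIcc_of_le hu.1, uIcc_of_le hst]; exact Icc_subset_Icc le_rfl hu.2
  have hsubφ' : ∀ u ∈ Icc s t, uIcc u t ⊆ uIcc s t := fun u hu => by
    rw [uIcc_of_le hu.2, uIcc_of_le hst]; exact Icc_subset_Icc hu.1 le_rfl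
  have hsubψ : ∀ u ∈ Icc s t, uIcc t u ⊆ uIcc s t := fun u hu => by
    rw [uIcc_comm, uIcc_of_le hu.2, uIcc_of_le hst]; exact Icc_subset_Icc hu.1 le_rfl
  have hsplitφ : ∀ u ∈ Icc s t, φ t - φ u = ∫ r' in u..t, b r' (φ r') := by
    intro u hu
    have hadj := intervalIntegral.integral_add_adjacent_intervals
      (hφint.mono_set (hsubφ u hu)) (hφint.mono_set (hsubφ' u hu))
    rw [hφeq t ⟨hst, le_rfl⟩, hφeq u hu, ← hadj]
    abel
  have hsplitψ : ∀ u ∈ Icc s t, ψ t - ψ u = ∫ r' in u..t, b r' (ψ r') := by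
    intro u hu
    rw [hψeq u hu, intervalIntegral.integral_symm]
    abel
  -- Gronwall comparison of φ and ψ backward from t
  set δ : ℝ → ℝ := fun u => ‖φ u - ψ u‖ with hδdef
  have hδcont : ContinuousOn δ (Icc s t) := (hφcont.sub hψcont).norm
  have hδineq : ∀ u ∈ Icc s t, δ u ≤ δ t + ∫ r' in u..t, (κ * δ r' + 0) := by
    intro u hu
    have hdiff : φ u - ψ u = (φ t - ψ t) -
        ∫ r' in u..t, (b r' (φ r') - b r' (ψ r')) := by
      rw [intervalIntegral.integral_sub (hφint.mono_set (hsubφ' u hu))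
        (hψint.mono_set (hsubφ' u hu)), ← hsplitφ u hu, ← hsplitψ u hu]
      abel
    calc δ u = ‖(φ t - ψ t) - ∫ r' in u..t, (b r' (φ r') - b r' (ψ r'))‖ := by
          show ‖φ u - ψ u‖ = _; rw [hdiff]
      _ ≤ δ t + ‖∫ r' in u..t, (b r' (φ r') - b r' (ψ r'))‖ := norm_sub_le _ _
      _ ≤ δ t + ∫ r' in u..t, ‖b r' (φ r') - b r' (ψ r')‖ := by
          refine add_le_add le_rfl (intervalIntegral.norm_integral_le_integral_norm hu.2)
      _ ≤ δ t + ∫ r' in u..t, (κ * δ r' + 0) := by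
          refine add_le_add le_rfl ?_
          refine intervalIntegral.integral_mono_on hu.2
            ((hφint.mono_set (hsubφ' u hu)).sub (hψint.mono_set (hsubφ' u hu))).norm
            ?_ ?_
          · refine ContinuousOn.intervalIntegrable ?_
            rw [uIcc_of_le hu.2]
            exact (continuousOn_const.mul (hδcont.mono
              (Icc_subset_Icc hu.1 le_rfl))).add continuousOn_const
          · intro r' hr'
            have hr'' : r' ∈ Icc s t := ⟨hu.1.trans hr'.1, hr'.2⟩
            have := hLip r' hr'' (φ r') (ψ r')
            simpa [hδdef] using this
  have hgb := gronwall_int_back hst hδcont (fun v _ => norm_nonneg _)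
    (norm_nonneg _) hκ.le le_rfl hδineq
  have hδs := hgb s ⟨le_rfl, hst⟩
  rw [gronwallBound_ε0] at hδs
  -- hence z is in the ball of radius r
  have hδt : δ t ≤ Real.exp (-κ * (t - s)) * r := by
    have : dist y (θ t s x) ≤ Real.exp (-κ * (t - s)) * r := Metric.mem_closedBall.1 hy
    rw [hδdef]
    simp only [hψt]
    rw [← dist_eq_norm, dist_comm]
    exact this
  have hzball : z ∈ Metric.closedBall x r := by
    have hδsval : δ s = dist z x := by
      rw [hδdef]; simp only [hφs]; rw [← dist_eq_norm, dist_comm, hzdef]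
    rw [Metric.mem_closedBall, ← hδsval]
    have hexp : Real.exp (-κ * (t - s)) * Real.exp (κ * (t - s)) = 1 := by
      rw [← Real.exp_add]
      ring_nf
      exact Real.exp_zero
    calc δ s ≤ δ t * Real.exp (κ * (t - s)) := hδs
      _ ≤ (Real.exp (-κ * (t - s)) * r) * Real.exp (κ * (t - s)) :=
          mul_le_mul_of_nonneg_right hδt (Real.exp_pos _).le
      _ = r := by rw [mul_comm (Real.exp (-κ * (t - s))) r, mul_assoc, hexp, mul_one]
  -- the forward trajectory from z agrees with ψ, so θ t s z = y
  set φz : ℝ → Vec d := fun u => θ u s z with hφzdef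
  have hφzs : φz s = z := by
    have := hθ s s hs hs z
    simpa [hφzdef, intervalIntegral.integral_same] using this
  have hφzeq : ∀ u ∈ Icc s t, φz u = φz s + ∫ r' in s..u, b r' (φz r') := by
    intro u hu
    rw [hφzs]
    exact hθ s u hs (hmemt u hu) z
  obtain ⟨hφzint, hφzcont⟩ := flow_core_fwd hbmeas hκ hMnn hLip hMb hst hφzeq
  have hsplitψ' : ∀ u ∈ Icc s t, ψ u - ψ s = ∫ r' in s..u, b r' (ψ r') := by
    intro u hu
    have hadj := intervalIntegral.integral_add_adjacent_intervals
      (hψint.mono_set (hsubψ s ⟨le_rfl, hst⟩)) (hψint.mono_set (hsubφ u hu))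
    rw [hψeq u hu, hψeq s ⟨le_rfl, hst⟩, ← hadj]
    abel
  set δ2 : ℝ → ℝ := fun u => ‖φz u - ψ u‖ with hδ2def
  have hδ2cont : ContinuousOn δ2 (Icc s t) := (hφzcont.sub hψcont).norm
  have hδ2ineq : ∀ u ∈ Icc s t, δ2 u ≤ 0 + ∫ r' in s..u, (κ * δ2 r' + 0) := by
    intro u hu
    have hdiff : φz u - ψ u = ∫ r' in s..u, (b r' (φz r') - b r' (ψ r')) := by
      rw [intervalIntegral.integral_sub (hφzint.mono_set (hsubφ u hu))
        (hψint.mono_set (hsubφ u hu))]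
      have h1 : φz u - φz s = ∫ r' in s..u, b r' (φz r') := by
        rw [hφzeq u hu]; abel
      have h2 := hsplitψ' u hu
      have h3 : φz s = ψ s := hφzs
      rw [← h1, ← h2]
      rw [h3]
      abel
    calc δ2 u = ‖∫ r' in s..u, (b r' (φz r') - b r' (ψ r'))‖ := by
          show ‖φz u - ψ u‖ = _; rw [hdiff]
      _ ≤ ∫ r' in s..u, ‖b r' (φz r') - b r' (ψ r')‖ :=
          intervalIntegral.norm_integral_le_integral_norm hu.1
      _ ≤ 0 + ∫ r' in s..u, (κ * δ2 r' + 0) := by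
          rw [zero_add]
          refine intervalIntegral.integral_mono_on hu.1
            ((hφzint.mono_set (hsubφ u hu)).sub (hψint.mono_set (hsubφ u hu))).norm
            ?_ ?_
          · refine ContinuousOn.intervalIntegrable ?_
            rw [uIcc_of_le hu.1]
            exact (continuousOn_const.mul (hδ2cont.mono
              (Icc_subset_Icc le_rfl hu.2))).add continuousOn_const
          · intro r' hr'
            have hr'' : r' ∈ Icc s t := ⟨hr'.1, hr'.2.trans hu.2⟩
            have := hLip r' hr'' (φz r') (ψ r')
            simpa [hδ2def] using this
  have hgb2 := gronwall_int (A := 0) hst hδ2cont (fun v _ => norm_nonneg _)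
    le_rfl hκ.le le_rfl hδ2ineq
  have hδ2t := hgb2 t ⟨hst, le_rfl⟩
  rw [gronwallBound_ε0_δ0] at hδ2t
  have hfinal : θ t s z = y := by
    have h0 : δ2 t = 0 := le_antisymm hδ2t (norm_nonneg _)
    have : φz t - ψ t = 0 := by
      rwa [hδ2def, norm_eq_zero] at h0
    have h1 : φz t = ψ t := sub_eq_zero.1 this
    exact h1.trans hψt
  exact ⟨z, hzball, hfinal⟩
end
end
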